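/- arXiv:1701.00084 — 12 statements merged into one kernel-verified Lean document; each statement's English description precedes it below -/
import Mathlib

section
/- The product of a hereditarily separable topological space with a topological space having a countable network is hereditarily separable. -/
/-- A space is hereditarily separable if every subspace is separable. -/
def HereditarilySeparable (X : Type*) [TopologicalSpace X] : Prop :=
  ∀ s : Set X, TopologicalSpace.SeparableSpace s

/-- A space has a countable network if there is a countable family of subsets
such that every open set is a union of members of the family. -/
def HasCountableNetwork (Y : Type*) [TopologicalSpace Y] : Prop :=
  ∃ N : Set (Set Y), N.Countable ∧
    ∀ U : Set Y, IsOpen U → ∀ y ∈ U, ∃ A ∈ N, y ∈ A ∧ A ⊆ U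

theorem product_hereditarily_separable
    (X Y : Type*) [TopologicalSpace X] [TopologicalSpace Y]
    (hX : HereditarilySeparable X) (hY : HasCountableNetwork Y) :
    HereditarilySeparable (X × Y) := by
  classical
  intro S
  obtain ⟨N, hNc, hN⟩ := hY
  -- the trace of S over a set A ⊆ Y
  set T : Set Y → Set X := fun A => {x | ∃ y ∈ A, (x, y) ∈ S} with hT
  have hsep : ∀ A : Set Y, ∃ D : Set ↥(T A), D.Countable ∧ Dense D := by
    intro A
    haveI := hX (T A)
    exact TopologicalSpace.exists_countable_dense _
  choose DA hDAc hDAd using hsep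
  -- pick a witness in S for each point of the trace
  let f : ∀ A : Set Y, ↥(T A) → X × Y := fun A d => (d.1, d.2.choose)
  have hf1 : ∀ A (d : ↥(T A)), (f A d).2 ∈ A := fun A d => d.2.choose_spec.1
  have hf2 : ∀ A (d : ↥(T A)), f A d ∈ S := fun A d => d.2.choose_spec.2
  set D : Set (X × Y) := ⋃ A ∈ N, f A '' (DA A) with hD
  have hDc : D.Countable := hNc.biUnion fun A _ => (hDAc A).image _
  have hDS : D ⊆ S := by
    intro p hp
    simp only [hD, Set.mem_iUnion] at hp
    obtain ⟨A, _, d, _, rfl⟩ := hp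
    exact hf2 A d
  -- key density property
  have key : ∀ z ∈ S, ∀ W : Set (X × Y), IsOpen W → z ∈ W → ∃ p ∈ D, p ∈ W := by
    rintro ⟨x, y⟩ hz W hW hzW
    obtain ⟨U, V, hU, hV, hxU, hyV, hUV⟩ := isOpen_prod_iff.1 hW x y hzW
    obtain ⟨A, hAN, hyA, hAV⟩ := hN V hV y hyV
    have hxT : x ∈ T A := ⟨y, hyA, hz⟩
    -- density of DA A at ⟨x, hxT⟩ within the open set val ⁻¹' U
    have hdense := (hDAd A) ⟨x, hxT⟩
    rw [mem_closure_iff] at hdense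
    obtain ⟨d, hdU, hdD⟩ := hdense (Subtype.val ⁻¹' U)
      (hU.preimage continuous_subtype_val) hxU
    refine ⟨f A d, ?_, ?_⟩
    · simp only [hD, Set.mem_iUnion]
      exact ⟨A, hAN, d, hdD, rfl⟩
    · exact hUV ⟨hdU, hAV (hf1 A d)⟩
  -- conclude separability of the subtype
  refine ⟨⟨Subtype.val ⁻¹' D, hDc.preimage Subtype.val_injective, ?_⟩⟩
  rw [dense_iff_inter_open]
  rintro O hO ⟨z, hzO⟩
  obtain ⟨W, hW, rfl⟩ := isOpen_induced_iff.1 hO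
  obtain ⟨p, hpD, hpW⟩ := key z.1 z.2 W hW hzO
  exact ⟨⟨p, hDS hpD⟩, hpW, hpD⟩
end

section
/- A topological space is hereditarily separable if and only if it has no uncountable left separated subspace. -/
open Set

/-- `f` restricted to the ordinals below `κ` enumerates a left separated family:
each point `f β` has an open neighborhood avoiding all points `f α` with `α < β`. -/
def IsLeftSeparatedFamily {X : Type*} [TopologicalSpace X]
    (κ : Ordinal) (f : Ordinal → X) : Prop :=
  ∀ β < κ, ∃ U : Set X, IsOpen U ∧ f β ∈ U ∧ ∀ α < β, f α ∉ U

/-!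
If `f` is left separated on `κ` and `κ` has uncountable cofinality, a countable subset of
`f '' Iio κ` lies in some initial segment `f '' Iio β`, whose closure misses `f β`; so no countable
set is dense in `f '' Iio κ`. Every uncountable `κ` is at least `ω₁`, which has cofinality `ℵ₁`.
Conversely, in a non-separable space the closure of a countable set is never everything, so a
transfinite recursion of length `ω₁` (all of whose initial segments are countable) can pick each
point outside the closure of the earlier ones.
-/

open Cardinal Ordinal TopologicalSpace Topology

theorem Ordinal.countable_Iio_of_lt_omega_one {β : Ordinal} (hβ : β < ω₁) :
    (Iio β).Countable := by
  rw [← le_aleph0_iff_set_countable, Cardinal.mk_Iio_ordinal, lift_le_aleph0,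
    ← lt_aleph_one_iff, ← lt_omega_iff_card_lt]
  exact hβ

theorem Ordinal.exists_forall_lt_omega_one_of_forall_countable {α : Type*}
    (p : Set α → α → Prop) (h : ∀ A : Set α, A.Countable → ∃ x, p A x) :
    ∃ f : Ordinal → α, ∀ β < ω₁, p (f '' Iio β) (f β) := by
  obtain ⟨x₀, -⟩ := h ∅ countable_empty
  have hF : ∀ A : Set α, ∃ x, A.Countable → p A x := fun A ↦ by
    by_cases hA : A.Countable
    · exact (h A hA).imp fun _ hx _ ↦ hx
    · exact ⟨x₀, fun hA' ↦ absurd hA' hA⟩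
  choose F hF using hF
  let f : Ordinal → α := lt_wf.fix fun β ih ↦ F (range fun γ : Iio β ↦ ih γ γ.2)
  have hf : ∀ β, f β = F (f '' Iio β) := fun β ↦ by
    rw [image_eq_range]
    exact lt_wf.fix_eq _ β
  exact ⟨f, fun β hβ ↦ hf β ▸ hF _ ((countable_Iio_of_lt_omega_one hβ).image f)⟩

section LeftSeparated

variable {X Y : Type*} [TopologicalSpace X] [TopologicalSpace Y] {κ : Ordinal}
  {f : Ordinal → X}

theorem isLeftSeparatedFamily_iff :
    IsLeftSeparatedFamily κ f ↔ ∀ β < κ, f β ∉ closure (f '' Iio β) := by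
  refine forall₂_congr fun β _ ↦ ?_
  simp only [mem_closure_iff, not_forall, exists_prop, not_nonempty_iff_eq_empty,
    ← disjoint_iff_inter_eq_empty, disjoint_right, mem_image, mem_Iio, forall_exists_index,
    and_imp, forall_apply_eq_imp_iff₂]

theorem IsLeftSeparatedFamily.mono {κ' : Ordinal} (hf : IsLeftSeparatedFamily κ f)
    (hκ : κ' ≤ κ) : IsLeftSeparatedFamily κ' f :=
  fun β hβ ↦ hf β (hβ.trans_le hκ)

theorem IsLeftSeparatedFamily.comp_isInducing {g : X → Y} (hg : IsInducing g)
    (hf : IsLeftSeparatedFamily κ f) : IsLeftSeparatedFamily κ (g ∘ f) := by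
  rw [isLeftSeparatedFamily_iff] at hf ⊢
  intro β hβ
  rw [image_comp, Function.comp_apply, ← mem_preimage, ← hg.closure_eq_preimage_closure_image]
  exact hf β hβ

theorem IsLeftSeparatedFamily.not_separableSpace_image (hκ : ℵ₀ < κ.cof)
    (hf : IsLeftSeparatedFamily κ f) : ¬ SeparableSpace (f '' Iio κ) := by
  intro hsep
  obtain ⟨D, hDc, hD⟩ := exists_countable_dense (f '' Iio κ)
  have : Countable D := hDc.to_subtype
  choose g hgκ hgf using fun d : D ↦ d.1.2
  set β := ⨆ d, g d + 1
  have hβ : β < κ := by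
    refine lift_iSup_add_one_lt_of_lt_cof ?_ hgκ
    rw [← lift_cof]
    exact (lift_le_aleph0.2 mk_le_aleph0).trans_lt (aleph0_lt_lift.2 hκ)
  have hDβ : ((↑) '' D : Set X) ⊆ f '' Iio β := by
    rintro _ ⟨d, hd, rfl⟩
    exact ⟨g ⟨d, hd⟩, (lt_add_one _).trans_le (Ordinal.le_iSup (fun d ↦ g d + 1) _),
      hgf ⟨d, hd⟩⟩
  exact isLeftSeparatedFamily_iff.1 hf β hβ
    (closure_mono hDβ (Subtype.dense_iff.1 hD ⟨β, hβ, rfl⟩))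

theorem exists_isLeftSeparatedFamily_omega_one_of_not_separableSpace
    (hX : ¬ SeparableSpace X) : ∃ f : Ordinal → X, IsLeftSeparatedFamily ω₁ f := by
  obtain ⟨f, hf⟩ := exists_forall_lt_omega_one_of_forall_countable (fun A x ↦ x ∉ closure A)
    fun A hA ↦ not_forall.1 fun hA' ↦ hX ⟨A, hA, hA'⟩
  exact ⟨f, isLeftSeparatedFamily_iff.2 hf⟩

end LeftSeparated

/-- A space is hereditarily separable iff it has no uncountable left separated subspace. -/
theorem hereditarilySeparable_iff_no_uncountable_left_separated
    (X : Type*) [TopologicalSpace X] :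
    HereditarilySeparable X ↔
      ¬ ∃ (κ : Ordinal) (f : Ordinal → X),
          Cardinal.aleph0 < κ.card ∧ IsLeftSeparatedFamily κ f := by
  constructor
  · rintro hX ⟨κ, f, hκ, hf⟩
    have hω₁κ : ω₁ ≤ κ := by
      rwa [← not_lt, lt_omega_iff_card_lt, lt_aleph_one_iff, not_le]
    exact (hf.mono hω₁κ).not_separableSpace_image (by simp) (hX _)
  · intro h s
    by_contra hs
    obtain ⟨f, hf⟩ := exists_isLeftSeparatedFamily_omega_one_of_not_separableSpace hs
    exact h ⟨ω₁, _, by simp, hf.comp_isInducing IsInducing.subtypeVal⟩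
end

section
/- If X has a countable base and X × Y contains an uncountable left separated subspace of length ω₁, then Y contains an uncountable left separated subspace. -/
/-!
Shrink the neighbourhood separating `f β` to a box `A β ×ˢ B β` with `A β` taken from a
countable base of `X`. Uncountably many `β < ω₁` share the same first factor `a`; for two such
indices `α < β` the point `f α` has first coordinate in `a`, so its second coordinate avoids
`B β`. Enumerating these indices increasingly in order type `ω₁` gives the family in `Y`.
-/

open Set

open Cardinal Ordinal TopologicalSpace

universe u v

theorem Set.exists_not_countable_inter_preimage {α β : Type*} {s : Set α} {t : Set β}
    {g : α → β} (hs : ¬ s.Countable) (hg : MapsTo g s t) (ht : t.Countable) :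
    ∃ b ∈ t, ¬ (s ∩ g ⁻¹' {b}).Countable := by
  by_contra! h
  refine hs ((ht.biUnion h).mono fun x hx => mem_biUnion (hg hx) ?_)
  exact ⟨hx, rfl⟩

namespace Ordinal

theorem countable_Iio_of_lt_omega_one_s2 {β : Ordinal.{u}} (h : β < ω₁) : (Iio β).Countable := by
  rw [← le_aleph0_iff_set_countable, Cardinal.mk_Iio_ordinal, lift_le_aleph0, ← lt_aleph_one_iff,
    ← lt_omega_iff_card_lt]
  exact h

theorem countable_Iic_of_lt_omega_one {β : Ordinal.{u}} (h : β < ω₁) : (Iic β).Countable := by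
  rw [← Iio_insert]
  exact (countable_Iio_of_lt_omega_one_s2 h).insert β

theorem not_countable_Iio_omega_one : ¬ (Iio (ω₁ : Ordinal.{u})).Countable := by
  rw [← le_aleph0_iff_set_countable, Cardinal.mk_Iio_ordinal, card_omega, lift_aleph, lift_one]
  exact not_le.2 aleph0_lt_aleph_one

/-- Like `Ordinal.enumOrd`, but indexed by ordinals of another universe, as the family in `Y`
requires. -/
noncomputable def enumOrd' (S : Set Ordinal.{u}) : Ordinal.{v} → Ordinal.{u} :=
  lt_wf.fix fun β e => sInf {x ∈ S | ∀ α (h : α < β), e α h < x}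

theorem enumOrd'_eq (S : Set Ordinal.{u}) (β : Ordinal.{v}) :
    enumOrd' S β = sInf {x ∈ S | ∀ α < β, enumOrd' S α < x} :=
  lt_wf.fix_eq _ β

theorem enumOrd'_mem_and_lt {S : Set Ordinal.{u}} (hS : ¬ S.Countable) (hSω₁ : S ⊆ Iio ω₁)
    {β : Ordinal.{v}} (hβ : β < ω₁) :
    enumOrd' S β ∈ S ∧ ∀ α < β, enumOrd' S α < enumOrd' S β := by
  induction β using WellFoundedLT.induction with
  | _ β ih =>
  have hne : {x ∈ S | ∀ α < β, enumOrd' S α < x}.Nonempty := by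
    by_contra! hempty
    refine hS (((countable_Iio_of_lt_omega_one_s2 hβ).biUnion fun α hα =>
      countable_Iic_of_lt_omega_one (hSω₁ (ih α hα (hα.trans hβ)).1)).mono fun x hx => ?_)
    obtain ⟨α, hα, hxα⟩ : ∃ α < β, x ≤ enumOrd' S α := by
      by_contra! h
      exact hempty.subset ⟨hx, h⟩
    exact mem_biUnion hα hxα
  rw [enumOrd'_eq]
  exact csInf_mem hne

end Ordinal

theorem IsLeftSeparatedFamily.exists_prod_basis {X Y : Type*} [TopologicalSpace X]
    [TopologicalSpace Y] {𝓑 : Set (Set X)} (h𝓑 : IsTopologicalBasis 𝓑) {κ : Ordinal}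
    {f : Ordinal → X × Y} (hf : IsLeftSeparatedFamily κ f) :
    ∃ (A : Ordinal → Set X) (B : Ordinal → Set Y), ∀ β < κ,
      A β ∈ 𝓑 ∧ IsOpen (B β) ∧ f β ∈ A β ×ˢ B β ∧ ∀ α < β, f α ∉ A β ×ˢ B β := by
  have box : ∀ β < κ, ∃ (a : Set X) (b : Set Y),
      a ∈ 𝓑 ∧ IsOpen b ∧ f β ∈ a ×ˢ b ∧ ∀ α < β, f α ∉ a ×ˢ b := by
    intro β hβ
    obtain ⟨U, hU, hβU, hsep⟩ := hf β hβ
    obtain ⟨_, ⟨a, ha, b, hb, rfl⟩, hβab, habU⟩ :=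
      (h𝓑.prod isTopologicalBasis_opens).exists_subset_of_mem_open hβU hU
    exact ⟨a, b, ha, hb, hβab, fun α hα hαab => hsep α hα (habU hαab)⟩
  choose! A B hAB using box
  exact ⟨A, B, hAB⟩

/-- If `X` is second countable and `X × Y` has a left separated family of length `ω₁`,
then `Y` has an uncountable left separated family. -/
theorem left_separated_in_factor
    (X Y : Type*) [TopologicalSpace X] [TopologicalSpace Y]
    [SecondCountableTopology X]
    (f : Ordinal → X × Y)
    (hf : IsLeftSeparatedFamily (Cardinal.aleph 1).ord f) :
    ∃ (κ : Ordinal) (g : Ordinal → Y),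
      Cardinal.aleph0 < κ.card ∧ IsLeftSeparatedFamily κ g := by
  rw [ord_aleph] at hf
  obtain ⟨A, B, hAB⟩ := hf.exists_prod_basis (isBasis_countableBasis X)
  obtain ⟨a, -, hS⟩ := exists_not_countable_inter_preimage not_countable_Iio_omega_one
    (fun β hβ => (hAB β hβ).1) (countable_countableBasis X)
  set S := Iio ω₁ ∩ A ⁻¹' {a}
  have hSω₁ : S ⊆ Iio ω₁ := inter_subset_left
  refine ⟨ω₁, fun β => (f (enumOrd' S β)).2, by simp, fun β hβ => ?_⟩
  obtain ⟨⟨hβω₁, hAβ⟩, hlt⟩ := enumOrd'_mem_and_lt hS hSω₁ hβ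
  obtain ⟨-, hB, hβB, hsep⟩ := hAB _ hβω₁
  refine ⟨B (enumOrd' S β), hB, hβB.2, fun α hα hαB => hsep _ (hlt α hα) ⟨?_, hαB⟩⟩
  obtain ⟨⟨hαω₁, hAα⟩, -⟩ := enumOrd'_mem_and_lt hS hSω₁ (hα.trans hβ)
  have hfα : (f (enumOrd' S α)).1 ∈ A (enumOrd' S α) := (hAB _ hαω₁).2.2.1.1
  rwa [hAα, ← hAβ] at hfα
end

section
/- Separability is a three-space property in topological groups: if N is a closed subgroup of a topological group C such that N is separable and the quotient space C/N (with the quotient topology under the canonical open map) is separable, then C is separable. -/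
open scoped Pointwise

namespace QuotientGroup

variable {G : Type*} [Group G] [TopologicalSpace G] [SeparatelyContinuousMul G] {N : Subgroup G}

/-- Given a nonempty open `U`, openness of the quotient map gives `s ∈ S` with `s N` meeting `U`;
then `{n : N | s n ∈ U}` is a nonempty open subset of `N`, which `D` meets. -/
@[to_additive]
theorem dense_mul_of_dense_image_mk {S : Set G} (hS : Dense ((↑) '' S : Set (G ⧸ N)))
    {D : Set N} (hD : Dense D) : Dense (S * Subtype.val '' D) := by
  refine dense_iff_inter_open.mpr fun U hU ⟨x, hx⟩ => ?_
  obtain ⟨_, ⟨u, hu, hus⟩, s, hs, rfl⟩ :=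
    hS.inter_open_nonempty _ (isOpenMap_coe U hU) ⟨x, x, hx, rfl⟩
  have hsu : s⁻¹ * u ∈ N := QuotientGroup.eq.mp hus.symm
  have hW : IsOpen {n : N | s * (n : G) ∈ U} :=
    hU.preimage ((continuous_const_mul s).comp continuous_subtype_val)
  obtain ⟨d, hdU, hdD⟩ := hD.inter_open_nonempty _ hW ⟨⟨s⁻¹ * u, hsu⟩, by simpa using hu⟩
  exact ⟨s * d, hdU, Set.mul_mem_mul hs ⟨d, hdD, rfl⟩⟩

end QuotientGroup

theorem separable_of_separable_closed_subgroup_and_quotient_general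
    (C : Type*) [Group C] [TopologicalSpace C] [IsTopologicalGroup C]
    (N : Subgroup C)
    (h1 : TopologicalSpace.SeparableSpace N)
    (h2 : TopologicalSpace.SeparableSpace (C ⧸ N)) :
    TopologicalSpace.SeparableSpace C := by
  obtain ⟨D, hDc, hDd⟩ := TopologicalSpace.exists_countable_dense N
  obtain ⟨E, hEc, hEd⟩ := TopologicalSpace.exists_countable_dense (C ⧸ N)
  have hE : ((↑) '' (Quotient.out '' E) : Set (C ⧸ N)) = E := by
    simp only [Set.image_image, QuotientGroup.out_eq', Set.image_id']
  refine ⟨Quotient.out '' E * Subtype.val '' D, ?_,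
    QuotientGroup.dense_mul_of_dense_image_mk (hE.symm ▸ hEd) hDd⟩
  rw [← Set.image2_mul]
  exact (hEc.image _).image2 (hDc.image _) _

/-- Separability is a three-space property in topological groups: if `N` is a closed
subgroup of the (Hausdorff) topological group `C` such that `N` and the quotient
space `C ⧸ N` are separable, then `C` is separable. -/
theorem separable_of_separable_closed_subgroup_and_quotient
    (C : Type*) [Group C] [TopologicalSpace C] [IsTopologicalGroup C] [T2Space C]
    (N : Subgroup C) (hN : IsClosed (N : Set C))
    (h1 : TopologicalSpace.SeparableSpace N)
    (h2 : TopologicalSpace.SeparableSpace (C ⧸ N)) :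
    TopologicalSpace.SeparableSpace C :=
  separable_of_separable_closed_subgroup_and_quotient_general C N h1 h2
end

section
/- If G is a countably compact topological group all of whose closed subgroups are separable, and H is a separable metrizable topological group, then every closed subgroup of G × H is separable. -/
/-!
Let `φ : C → H` be the second projection. Since `G` is countably compact and `H` is first
countable, `Prod.snd : G × H → H` is a closed map, so `φ` is a closed continuous
homomorphism and `C ⧸ ker φ` is topologically isomorphic to the subgroup `φ(C)` of the
separable metrizable `H`, hence separable. The kernel `ker φ` is a continuous image of the
closed subgroup `{g | (g, 1) ∈ C}` of `G`, hence separable. Separability is a three-space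
property of topological groups: lifts of a countable dense subset of `C ⧸ N` times a
countable dense subset of `N` are dense in `C`.
-/

/-- A space is countably compact if every countable open cover has a finite subcover. -/
def CountablyCompact (X : Type*) [TopologicalSpace X] : Prop :=
  ∀ 𝒰 : Set (Set X), 𝒰.Countable → (∀ U ∈ 𝒰, IsOpen U) → ⋃₀ 𝒰 = Set.univ →
    ∃ ℱ ⊆ 𝒰, ℱ.Finite ∧ ⋃₀ ℱ = Set.univ

open Filter Topology Set TopologicalSpace

theorem CountablyCompact.countablyCompactSpace {X : Type*} [TopologicalSpace X]
    (hX : CountablyCompact X) : CountablyCompactSpace X := by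
  refine ⟨isCountablyCompact_iff_countable_open_cover'.2 fun U hUo hcover => ?_⟩
  have := hX (range U) (countable_range U) (forall_mem_range.2 hUo)
    (by rw [sUnion_range]; exact univ_subset_iff.1 hcover)
  rw [← image_univ, exists_subset_image_finite_and] at this
  obtain ⟨t, -, ht, htU⟩ := this
  exact ⟨t, ht, by rw [← sUnion_image, htU]⟩

theorem MapClusterPt.prodMk_of_tendsto {ι X Y : Type*} [TopologicalSpace X] [TopologicalSpace Y]
    {l : Filter ι} {u : ι → X} {v : ι → Y} {x : X} {y : Y}
    (hu : MapClusterPt x l u) (hv : Tendsto v l (𝓝 y)) :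
    MapClusterPt (x, y) l (fun i => (u i, v i)) := by
  rw [mapClusterPt_iff_frequently] at hu ⊢
  intro s hs
  obtain ⟨t₁, ht₁, t₂, ht₂, hst⟩ := mem_nhds_prod_iff.1 hs
  exact ((hu t₁ ht₁).and_eventually (hv ht₂)).mono fun i hi => hst hi

theorem isClosedMap_snd_of_countablyCompactSpace {X Y : Type*} [TopologicalSpace X]
    [TopologicalSpace Y] [CountablyCompactSpace X] [FirstCountableTopology Y] :
    IsClosedMap (Prod.snd : X × Y → Y) := by
  intro F hF
  refine isClosed_of_closure_subset fun y hy => ?_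
  obtain ⟨v, hvF, hv⟩ := mem_closure_iff_seq_limit.1 hy
  choose w hwF hwv using hvF
  obtain ⟨x, -, hx⟩ := CountablyCompactSpace.isCountablyCompact_univ.seq_clusterPt
    (fun n => (w n).1) (by simp)
  have hxy : MapClusterPt (x, y) atTop w := by
    simpa [← hwv] using hx.prodMk_of_tendsto hv
  exact ⟨(x, y), hF.mem_of_mapClusterPt hxy (.of_forall hwF), rfl⟩

theorem separableSpace_of_subgroup_of_quotient {G : Type*} [Group G] [TopologicalSpace G]
    [IsTopologicalGroup G] (N : Subgroup G) [SeparableSpace N] [SeparableSpace (G ⧸ N)] :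
    SeparableSpace G := by
  obtain ⟨D, hDc, hDd⟩ := exists_countable_dense N
  obtain ⟨S, hSc, hSd⟩ := exists_countable_dense (G ⧸ N)
  refine ⟨⟨image2 (· * ·) (Quotient.out '' S) (Subtype.val '' D),
    (hSc.image _).image2 (hDc.image _) _, dense_iff_inter_open.2 fun U hU ⟨u, hu⟩ => ?_⟩⟩
  obtain ⟨_, ⟨u', hu'U, rfl⟩, hS⟩ :=
    hSd.inter_open_nonempty _ (QuotientGroup.isOpenMap_coe U hU) ⟨_, mem_image_of_mem _ hu⟩
  obtain ⟨n, hn⟩ := QuotientGroup.mk_out_eq_mul N u'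
  obtain ⟨d, hdU, hdD⟩ := hDd.inter_open_nonempty
    (Subtype.val ⁻¹' ((Quotient.out (u' : G ⧸ N) * ·) ⁻¹' U))
    ((hU.preimage (continuous_const_mul _)).preimage continuous_subtype_val)
    ⟨n⁻¹, by simpa [hn] using hu'U⟩
  exact ⟨_, hdU, mem_image2_of_mem (mem_image_of_mem _ hS) (mem_image_of_mem _ hdD)⟩

theorem closed_subgroups_of_product_countablyCompact_metrizable_general
    (G H : Type*) [Group G] [TopologicalSpace G] [IsTopologicalGroup G]
    [Group H] [TopologicalSpace H] [IsTopologicalGroup H]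
    [TopologicalSpace.MetrizableSpace H] [TopologicalSpace.SeparableSpace H]
    (hGc : CountablyCompact G)
    (hG : ∀ N : Subgroup G, IsClosed (N : Set G) → TopologicalSpace.SeparableSpace N)
    (C : Subgroup (G × H)) (hC : IsClosed (C : Set (G × H))) :
    TopologicalSpace.SeparableSpace C := by
  have := hGc.countablyCompactSpace
  set φ : C →* H := (MonoidHom.snd G H).comp C.subtype
  have hφ : IsClosedMap φ :=
    isClosedMap_snd_of_countablyCompactSpace.comp hC.isClosedMap_subtype_val
  have : SeparableSpace φ.range :=
    (IsSeparable.of_separableSpace (φ.range : Set H)).separableSpace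
  have : SeparableSpace (C ⧸ φ.ker) :=
    (ContinuousMulEquiv.quotientKerEquivRange
      (hφ.isStrictMap (continuous_snd.comp continuous_subtype_val))).symm.toHomeomorph
      |>.isQuotientMap.separableSpace
  set K : Subgroup G := C.comap (MonoidHom.inl G H)
  have := hG K (hC.preimage (continuous_id.prodMk continuous_const))
  have : SeparableSpace φ.ker := by
    let ι : K → φ.ker := fun k => ⟨⟨(k, 1), k.2⟩, rfl⟩
    refine Function.Surjective.denseRange (f := ι) ?_ |>.separableSpace (by fun_prop)
    rintro ⟨⟨⟨g, h⟩, hgh⟩, hh : h = 1⟩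
    subst hh
    exact ⟨⟨g, hgh⟩, rfl⟩
  exact separableSpace_of_subgroup_of_quotient φ.ker

/-- If `G` is countably compact with all closed subgroups separable and `H` is a separable
metrizable topological group, then every closed subgroup of `G × H` is separable. -/
theorem closed_subgroups_of_product_countablyCompact_metrizable
    (G H : Type*) [Group G] [TopologicalSpace G] [IsTopologicalGroup G] [T2Space G]
    [Group H] [TopologicalSpace H] [IsTopologicalGroup H]
    [TopologicalSpace.MetrizableSpace H] [TopologicalSpace.SeparableSpace H]
    (hGc : CountablyCompact G)
    (hG : ∀ N : Subgroup G, IsClosed (N : Set G) → TopologicalSpace.SeparableSpace N)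
    (C : Subgroup (G × H)) (hC : IsClosed (C : Set (G × H))) :
    TopologicalSpace.SeparableSpace C :=
  closed_subgroups_of_product_countablyCompact_metrizable_general G H hGc hG C hC
end

section
/- If G is a countable topological group and H is a topological group in which all closed subgroups are separable, then every closed subgroup of G × H is separable. -/
/-!
Let `K ≤ C` be the subgroup of elements of `C` with trivial `G`-coordinate. The map `h ↦ (1, h)`
sends the closed subgroup `{h | (1, h) ∈ C}` of `H` continuously onto `K`, so `K` is separable. The
projection to `G` embeds `C ⧸ K` into the countable group `G`, so `C` is a countable union of
left translates of `K`, each of them separable.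
-/

open TopologicalSpace

theorem Subgroup.separableSpace_of_countable_quotient {X : Type*} [Group X] [TopologicalSpace X]
    [ContinuousMul X] (K : Subgroup X) [Countable (X ⧸ K)] [SeparableSpace K] :
    SeparableSpace X := by
  have hcover : (Set.univ : Set X) = ⋃ q : X ⧸ K, (q.out * ·) '' K := by
    refine (Set.eq_univ_of_forall fun x : X => Set.mem_iUnion.2 ⟨(x : X ⧸ K), ?_⟩).symm
    obtain ⟨k, hk⟩ := QuotientGroup.mk_out_eq_mul K x
    exact ⟨k⁻¹, K.inv_mem k.2, by simp [hk]⟩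
  rw [← isSeparable_univ_iff, hcover]
  exact isSeparable_iUnion.2 fun q => (IsSeparable.of_subtype (K : Set X)).image
    (continuous_const_mul q.out)

namespace Subgroup

variable {G H : Type*} [Group G] [Group H]

def kerFst (C : Subgroup (G × H)) : Subgroup C :=
  ((MonoidHom.fst G H).comp C.subtype).ker

theorem countable_quotient_kerFst [Countable G] (C : Subgroup (G × H)) :
    Countable (C ⧸ C.kerFst) :=
  (QuotientGroup.kerLift_injective _).countable

theorem separableSpace_kerFst [TopologicalSpace G] [TopologicalSpace H] (C : Subgroup (G × H))
    [SeparableSpace (C.comap (MonoidHom.inr G H))] : SeparableSpace C.kerFst := by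
  let f : C.comap (MonoidHom.inr G H) → C.kerFst := fun n => ⟨⟨(1, n), n.2⟩, rfl⟩
  have hf : Continuous f := by fun_prop
  refine DenseRange.separableSpace (Function.Surjective.denseRange ?_) hf
  rintro ⟨⟨⟨g, h⟩, hC⟩, hg⟩
  obtain rfl : g = 1 := hg
  exact ⟨⟨h, hC⟩, rfl⟩

end Subgroup

theorem closed_subgroups_of_product_with_countable_factor_general
    (G H : Type*) [Group G] [TopologicalSpace G] [IsTopologicalGroup G]
    [Countable G]
    [Group H] [TopologicalSpace H] [IsTopologicalGroup H]
    (hH : ∀ N : Subgroup H, IsClosed (N : Set H) → TopologicalSpace.SeparableSpace N)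
    (C : Subgroup (G × H)) (hC : IsClosed (C : Set (G × H))) :
    TopologicalSpace.SeparableSpace C := by
  have : SeparableSpace (C.comap (MonoidHom.inr G H)) :=
    hH _ (hC.preimage (by fun_prop : Continuous fun h : H => ((1 : G), h)))
  have := C.separableSpace_kerFst
  have := C.countable_quotient_kerFst
  exact C.kerFst.separableSpace_of_countable_quotient

/-- If `G` is a countable topological group and all closed subgroups of `H` are separable,
then every closed subgroup of `G × H` is separable. -/
theorem closed_subgroups_of_product_with_countable_factor
    (G H : Type*) [Group G] [TopologicalSpace G] [IsTopologicalGroup G] [T2Space G]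
    [Countable G]
    [Group H] [TopologicalSpace H] [IsTopologicalGroup H] [T2Space H]
    (hH : ∀ N : Subgroup H, IsClosed (N : Set H) → TopologicalSpace.SeparableSpace N)
    (C : Subgroup (G × H)) (hC : IsClosed (C : Set (G × H))) :
    TopologicalSpace.SeparableSpace C :=
  closed_subgroups_of_product_with_countable_factor_general G H hH C hC
end

section
/- Let Y be a subspace of a product X = ∏_{α∈A} X_α of regular pseudocomplete first countable spaces such that π_B(Y) = ∏_{α∈B} X_α for every countable B ⊆ A. Then Y is pseudocomplete. -/
open Set

/-- A π-base: a family of nonempty open sets such that every nonempty open set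
contains a member of the family. -/
def IsPiBase {X : Type*} [TopologicalSpace X] (P : Set (Set X)) : Prop :=
  (∀ U ∈ P, IsOpen U ∧ U.Nonempty) ∧
    ∀ V : Set X, IsOpen V → V.Nonempty → ∃ U ∈ P, U ⊆ V

/-- Oxtoby pseudocompleteness. -/
def Pseudocomplete (X : Type*) [TopologicalSpace X] : Prop :=
  ∃ P : ℕ → Set (Set X), (∀ n, IsPiBase (P n)) ∧
    ∀ U : ℕ → Set X, (∀ n, U n ∈ P n) →
      (∀ n, closure (U (n + 1)) ⊆ U n) → (⋂ n, U n).Nonempty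

lemma isPiBase_step {Z : Type*} [TopologicalSpace Z] [RegularSpace Z]
    {Q P : Set (Set Z)} (hQ : IsPiBase Q) (hP : IsPiBase P) :
    IsPiBase {U ∈ P | ∃ V ∈ Q, closure U ⊆ V} := by
  constructor
  · rintro U ⟨hU, -⟩; exact hP.1 U hU
  · intro V hV hVne
    obtain ⟨W, hWQ, hWV⟩ := hQ.2 V hV hVne
    obtain ⟨hWopen, x, hx⟩ := hQ.1 W hWQ
    obtain ⟨t, ht, htc, htW⟩ := exists_mem_nhds_isClosed_subset (hWopen.mem_nhds hx)
    obtain ⟨U, hUP, hUt⟩ := hP.2 (interior t) isOpen_interior ⟨x, mem_interior_iff_mem_nhds.2 ht⟩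
    refine ⟨U, ⟨hUP, W, hWQ, ?_⟩, (hUt.trans interior_subset).trans (htW.trans hWV)⟩
    exact ((closure_mono hUt).trans (closure_minimal interior_subset htc)).trans htW

lemma exists_good {Z : Type*} [TopologicalSpace Z] [RegularSpace Z] (h : Pseudocomplete Z) :
    ∃ Q : ℕ → Set (Set Z), (∀ n, IsPiBase (Q n)) ∧
      ∀ (m : ℕ) (U : ℕ → Set Z), (∀ n, U n ∈ Q (m + n)) →
        (∀ n, closure (U (n + 1)) ⊆ U n) → (⋂ n, U n).Nonempty := by
  obtain ⟨P, hP, hchain⟩ := h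
  let Q : ℕ → Set (Set Z) := fun n =>
    Nat.rec (P 0) (fun n Qn => {U ∈ P (n + 1) | ∃ V ∈ Qn, closure U ⊆ V}) n
  have hQP : ∀ n, Q n ⊆ P n := by
    intro n
    cases n with
    | zero => exact subset_rfl
    | succ n => exact fun U hU => hU.1
  have hQpi : ∀ n, IsPiBase (Q n) := by
    intro n
    induction n with
    | zero => exact hP 0
    | succ n ih => exact isPiBase_step ih (hP (n + 1))
  refine ⟨Q, hQpi, ?_⟩
  intro m
  induction m with
  | zero =>
    intro U hU hcl
    exact hchain U (fun n => hQP n (by simpa using hU n)) hcl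
  | succ m ih =>
    intro U hU hcl
    have h0 : U 0 ∈ {U ∈ P (m + 1) | ∃ V ∈ Q m, closure U ⊆ V} := hU 0
    obtain ⟨-, V, hVQ, hclV⟩ := h0
    have key := ih (fun n => Nat.rec V (fun k _ => U k) n) ?_ ?_
    · obtain ⟨x, hx⟩ := key
      simp only [mem_iInter] at hx
      exact ⟨x, mem_iInter.2 fun n => hx (n + 1)⟩
    · intro n
      cases n with
      | zero => simpa using hVQ
      | succ k =>
        have := hU k
        have e : m + 1 + k = m + (k + 1) := by omega
        rw [e] at this
        exact this
    · intro n
      cases n with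
      | zero => exact hclV
      | succ k => exact hcl k

/-- A subspace of a product of regular pseudocomplete first countable spaces which fills
all countable faces of the product is pseudocomplete. -/
theorem pseudocomplete_of_fills_countable_faces
    {A : Type*} (X : A → Type*) [∀ α, TopologicalSpace (X α)]
    [∀ α, RegularSpace (X α)] [∀ α, FirstCountableTopology (X α)]
    (hpc : ∀ α, Pseudocomplete (X α))
    (Y : Set (∀ α, X α))
    (hY : ∀ B : Set A, B.Countable → ∀ g : (b : B) → X b, ∃ y ∈ Y, ∀ b : B, y b = g b) :
    Pseudocomplete Y := by
  classical
  by_cases hne : ∀ α, Nonempty (X α)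
  case neg =>
    refine ⟨fun _ => ∅, fun n => ⟨fun U hU => absurd hU (notMem_empty U), ?_⟩,
      fun U hU _ => absurd (hU 0) (notMem_empty _)⟩
    rintro V - ⟨y, -⟩
    exact absurd (fun α => ⟨y.1 α⟩) hne
  haveI := hne
  choose Q hQpi hQchain using fun α => exists_good (hpc α)
  -- density of Y
  have hdense : ∀ O : Set (∀ α, X α), IsOpen O → O.Nonempty → (Y ∩ O).Nonempty := by
    intro O hO ⟨f, hf⟩
    obtain ⟨I, u, hu, hIu⟩ := isOpen_pi_iff.1 hO f hf
    obtain ⟨y, hyY, hyg⟩ := hY I (I : Set A).to_countable (fun b => f b)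
    refine ⟨y, hyY, hIu fun i hi => ?_⟩
    rw [hyg ⟨i, hi⟩]
    exact (hu i hi).2
  -- basic facts about admissible families
  have Wopen : ∀ {n : ℕ} {W : ∀ α, Set (X α)}, (∀ α, W α = univ ∨ W α ∈ Q α n) →
      ∀ α, IsOpen (W α) := by
    intro n W hW α
    rcases hW α with h | h
    · rw [h]; exact isOpen_univ
    · exact ((hQpi α n).1 _ h).1
  have Wne : ∀ {n : ℕ} {W : ∀ α, Set (X α)}, (∀ α, W α = univ ∨ W α ∈ Q α n) →
      ∀ α, (W α).Nonempty := by
    intro n W hW α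
    rcases hW α with h | h
    · rw [h]; exact univ_nonempty
    · exact ((hQpi α n).1 _ h).2
  have piOpen : ∀ {n : ℕ} {W : ∀ α, Set (X α)}, ({α | W α ≠ univ}).Finite →
      (∀ α, W α = univ ∨ W α ∈ Q α n) → IsOpen (univ.pi W) := by
    intro n W hfin hW
    have : univ.pi W = {α | W α ≠ univ}.pi W := by
      ext f
      simp only [mem_pi, mem_univ, forall_true_left, mem_setOf_eq]
      exact ⟨fun h α _ => h α, fun h α => by
        by_cases hα : W α = univ
        · rw [hα]; trivial
        · exact h α hα⟩
    rw [this]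
    exact isOpen_set_pi hfin (fun a _ => Wopen hW a)
  -- points of Y in pi of closures are in the subtype closure of the trace
  have hclosure : ∀ {n : ℕ} {W : ∀ α, Set (X α)}, ({α | W α ≠ univ}).Finite →
      (∀ α, W α = univ ∨ W α ∈ Q α n) →
      ∀ y : ∀ α, X α, (hyY : y ∈ Y) → (∀ α, y α ∈ closure (W α)) →
      (⟨y, hyY⟩ : ↥Y) ∈ closure (Subtype.val ⁻¹' (univ.pi W)) := by
    intro n W hfin hW y hyY hy
    rw [closure_subtype]
    rw [Subtype.image_preimage_coe]
    -- show y ∈ closure (Y ∩ univ.pi W)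
    have hyc : y ∈ closure (univ.pi W) := by
      rw [closure_pi_set]
      exact fun α _ => hy α
    rw [mem_closure_iff] at hyc ⊢
    intro O hO hyO
    obtain ⟨z, hzY, hzO⟩ := hdense (O ∩ univ.pi W) (hO.inter (piOpen hfin hW))
      (hyc O hO hyO)
    exact ⟨z, hzO.1, hzY, hzO.2⟩
  -- the π-bases on Y
  refine ⟨fun n => {V | ∃ W : ∀ α, Set (X α), ({α | W α ≠ univ}).Finite ∧
      (∀ α, W α = univ ∨ W α ∈ Q α n) ∧ V = Subtype.val ⁻¹' (univ.pi W)}, ?_, ?_⟩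
  · intro n
    constructor
    · rintro V ⟨W, hfin, hW, rfl⟩
      refine ⟨(piOpen hfin hW).preimage continuous_subtype_val, ?_⟩
      obtain ⟨y, hyY, hyg⟩ := hY {α | W α ≠ univ} hfin.countable
        (fun b => (Wne hW b).some)
      refine ⟨⟨y, hyY⟩, fun α _ => ?_⟩
      by_cases hα : W α = univ
      · rw [hα]; trivial
      · show y α ∈ W α
        rw [hyg ⟨α, hα⟩]
        exact (Wne hW α).some_mem
    · intro V hV ⟨v, hvV⟩
      obtain ⟨O, hO, rfl⟩ := isOpen_induced_iff.1 hV
      obtain ⟨I, u, hu, hIu⟩ := isOpen_pi_iff.1 hO v.1 hvV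
      have : ∀ i ∈ I, ∃ w, w ∈ Q i n ∧ w ⊆ u i := by
        intro i hi
        obtain ⟨w, hw, hwu⟩ := (hQpi i n).2 (u i) (hu i hi).1 ⟨v.1 i, (hu i hi).2⟩
        exact ⟨w, hw, hwu⟩
      choose! w hwQ hwu using this
      refine ⟨Subtype.val ⁻¹' (univ.pi fun α => if α ∈ I then w α else univ),
        ⟨_, ?_, ?_, rfl⟩, ?_⟩
      · exact I.finite_toSet.subset (fun α hα => by
          by_contra h
          exact hα (if_neg h))
      · intro α
        by_cases hα : α ∈ I
        · rw [if_pos hα]; exact Or.inr (hwQ α hα)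
        · rw [if_neg hα]; exact Or.inl rfl
      · intro z hz
        refine hIu (fun i hi => ?_)
        have this : (z : ∀ α, X α) i ∈ if i ∈ I then w i else univ := hz i (mem_univ i)
        rw [if_pos (Finset.mem_coe.1 hi)] at this
        exact hwu i (Finset.mem_coe.1 hi) this
  · -- the chain condition
    intro V hV hcl
    choose W hWfin hWQ hWeq using hV
    -- key: coordinatewise nesting
    have hkey : ∀ n α, closure (W (n + 1) α) ⊆ W n α := by
      intro n α x hx
      set B : Set A := insert α {β | W (n + 1) β ≠ univ} with hB
      have hBc : B.Countable := ((hWfin (n + 1)).insert α).countable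
      obtain ⟨y, hyY, hyg⟩ := hY B hBc
        (fun b => if h : (b : A) = α then cast (congrArg X h).symm x
          else (Wne (hWQ (n + 1)) b).some)
      have hyα : y α = x := by
        have := hyg ⟨α, mem_insert α _⟩
        simpa using this
      have hycl : ∀ β, y β ∈ closure (W (n + 1) β) := by
        intro β
        by_cases hβα : β = α
        · subst hβα; rw [hyα]; exact hx
        · by_cases hβ : W (n + 1) β = univ
          · rw [hβ, closure_univ]; trivial
          · have := hyg ⟨β, Or.inr hβ⟩
            rw [dif_neg hβα] at this
            rw [this]
            exact subset_closure (Wne (hWQ (n + 1)) β).some_mem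
      have hmem : (⟨y, hyY⟩ : ↥Y) ∈ closure (V (n + 1)) := by
        rw [hWeq (n + 1)]
        exact hclosure (hWfin (n + 1)) (hWQ (n + 1)) y hyY hycl
      have := hcl n hmem
      rw [hWeq n] at this
      have h2 : y α ∈ W n α := this α (mem_univ α)
      exact hyα ▸ h2
    have hmono : ∀ n α, W n α ≠ univ → W (n + 1) α ≠ univ := by
      intro n α h h'
      apply h
      apply eq_univ_of_univ_subset
      calc univ = closure (W (n + 1) α) := by rw [h', closure_univ]
        _ ⊆ W n α := hkey n α
    set B : Set A := ⋃ n, {α | W n α ≠ univ} with hBdef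
    have hBc : B.Countable := countable_iUnion (fun n => (hWfin n).countable)
    have hxex : ∀ α ∈ B, ∃ x : X α, ∀ n, x ∈ W n α := by
      intro α hα
      rw [hBdef, mem_iUnion] at hα
      have hαex : ∃ n, W n α ≠ univ := hα
      set m := Nat.find hαex with hm
      have hstep : ∀ k, W (m + k) α ≠ univ := by
        intro k
        induction k with
        | zero => exact Nat.find_spec hαex
        | succ k ih => exact hmono (m + k) α ih
      have hQmem : ∀ k, W (m + k) α ∈ Q α (m + k) := fun k =>
        (hWQ (m + k) α).resolve_left (hstep k)
      have := hQchain α m (fun k => W (m + k) α) hQmem (fun k => hkey (m + k) α)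
      obtain ⟨x, hx⟩ := this
      rw [mem_iInter] at hx
      refine ⟨x, fun n => ?_⟩
      by_cases hn : m ≤ n
      · have := hx (n - m)
        rwa [Nat.add_sub_cancel' hn] at this
      · have : W n α = univ := by
          by_contra h
          exact hn (Nat.find_min' hαex h)
        rw [this]; trivial
    choose! x hx using hxex
    obtain ⟨y, hyY, hyg⟩ := hY B hBc (fun b => x b)
    refine ⟨⟨y, hyY⟩, mem_iInter.2 fun n => ?_⟩
    rw [hWeq n]
    intro α _
    by_cases hα : α ∈ B
    · show y α ∈ W n α
      rw [hyg ⟨α, hα⟩]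
      exact hx α hα n
    · have : W n α = univ := by
        by_contra h
        exact hα (mem_iUnion.2 ⟨n, h⟩)
      rw [this]; trivial
end

section
/- For every infinite cardinal κ ≤ 𝔠, the compact Boolean group C = ℤ(2)^κ has a countable π-network V = {V_n : n ∈ ω} such that |V_n| ≥ 𝔠 for each n. -/
open Set

instance : TopologicalSpace (ZMod 2) := ⊥
instance : DiscreteTopology (ZMod 2) := ⟨rfl⟩

lemma mk_nat_arrow_zmod2 : Cardinal.mk (ℕ → ZMod 2) = Cardinal.continuum := by
  rw [Cardinal.mk_arrow]
  simp [Cardinal.mk_fintype, Cardinal.two_power_aleph0]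

/-- For every infinite cardinal `κ ≤ 𝔠` (realized as an index type `ι`), the compact
Boolean group `ℤ(2)^κ` has a countable π-network `V` with `|V n| ≥ 𝔠` for every `n`. -/
theorem pi_network_of_boolean_group
    (ι : Type) [Infinite ι] (hκ : Cardinal.mk ι ≤ Cardinal.continuum) :
    ∃ V : ℕ → Set (ι → ZMod 2),
      (∀ n, Cardinal.continuum ≤ Cardinal.mk (V n)) ∧
      ∀ U : Set (ι → ZMod 2), IsOpen U → U.Nonempty → ∃ n, V n ⊆ U := by
  classical
  obtain ⟨g, hg⟩ : ∃ g : ι → (ℕ → ZMod 2), Function.Injective g := by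
    have hle : Cardinal.mk ι ≤ Cardinal.mk (ℕ → ZMod 2) := by
      rw [mk_nat_arrow_zmod2]; exact hκ
    obtain ⟨⟨g, hg⟩⟩ := Cardinal.le_def _ _ |>.mp hle
    exact ⟨g, hg⟩
  let f : ℕ ↪ ι := Infinite.natEmbedding ι
  let e : ι → ℕ → ZMod 2 := fun i n =>
    if h : ∃ k, f k = i then (if n = 2 * h.choose + 2 then 1 else 0)
    else (if n = 0 then 1 else g i (n - 1))
  have hone : (1 : ZMod 2) ≠ 0 := one_ne_zero
  have hef : ∀ k n, e (f k) n = if n = 2 * k + 2 then 1 else 0 := by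
    intro k n
    have h : ∃ k', f k' = f k := ⟨k, rfl⟩
    have hk : h.choose = k := f.injective h.choose_spec
    simp only [e, dif_pos h, hk]
  have heg : ∀ i, (¬ ∃ k, f k = i) → ∀ n, e i n = if n = 0 then 1 else g i (n-1) := by
    intro i h n; simp only [e, dif_neg h]
  have hene : ∀ i, ∃ n, e i n = 1 := by
    intro i
    by_cases h : ∃ k, f k = i
    · obtain ⟨k, hk⟩ := h
      exact ⟨2*k+2, by rw [← hk, hef]; simp⟩
    · exact ⟨0, by rw [heg i h]; simp⟩
  have einj : Function.Injective e := by
    intro i i' hii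
    by_cases h : ∃ k, f k = i <;> by_cases h' : ∃ k, f k = i'
    · obtain ⟨k, hk⟩ := h; obtain ⟨k', hk'⟩ := h'
      subst hk; subst hk'
      have hc := congrFun hii (2*k+2)
      rw [hef, hef, if_pos rfl] at hc
      have h2 : (2*k+2 : ℕ) = 2*k'+2 := by
        by_contra hne
        rw [if_neg hne] at hc
        exact hone hc
      have : k = k' := by omega
      rw [this]
    · exfalso
      obtain ⟨k, hk⟩ := h; subst hk
      have hc := congrFun hii 0
      rw [hef, heg _ h', if_neg (show (0:ℕ) ≠ 2*k+2 by omega), if_pos rfl] at hc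
      exact hone hc.symm
    · exfalso
      obtain ⟨k, hk⟩ := h'; subst hk
      have hc := congrFun hii 0
      rw [hef, heg _ h, if_neg (show (0:ℕ) ≠ 2*k+2 by omega), if_pos rfl] at hc
      exact hone hc
    · apply hg
      funext n
      have hc := congrFun hii (n+1)
      rw [heg _ h, heg _ h'] at hc
      simpa using hc
  let T := Σ m : ℕ, ((Fin m → ZMod 2) → Option (ZMod 2))
  let Wf : T → Set (ι → ZMod 2) := fun t =>
    {x | ∀ i v, t.2 (fun n => e i n.val) = some v → x i = v}
  obtain ⟨σf, hσf⟩ := exists_surjective_nat T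
  refine ⟨fun n => if Cardinal.continuum ≤ Cardinal.mk (Wf (σf n)) then Wf (σf n) else univ,
    ?_, ?_⟩
  · intro n
    dsimp only
    split_ifs with h
    · exact h
    · rw [Cardinal.mk_univ, Cardinal.mk_arrow]
      simp only [Cardinal.lift_id, Cardinal.mk_fintype]
      have : (Fintype.card (ZMod 2) : Cardinal) = 2 := by norm_num
      rw [this, ← Cardinal.two_power_aleph0]
      exact Cardinal.power_le_power_left (by norm_num) (Cardinal.aleph0_le_mk ι)
  · intro U hU hne
    obtain ⟨y, hy⟩ := hne
    obtain ⟨F, u, hu, hsub⟩ := isOpen_pi_iff.mp hU y hy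
    have hbasic : (↑F : Set ι).pi (fun j => {y j}) ⊆ U := by
      refine subset_trans ?_ hsub
      intro x hx j hj
      have : x j = y j := hx j hj
      rw [this]
      exact (hu j hj).2
    let n₀ : ι → ℕ := fun j => Nat.find (hene j)
    let d : ι → ι → ℕ := fun j j' =>
      if h : e j = e j' then 0 else Nat.find (Function.ne_iff.mp h)
    let m : ℕ := (F.sup n₀) + (F.sup fun j => F.sup (d j)) + 1
    have hm₀ : ∀ j ∈ F, n₀ j < m ∧ e j (n₀ j) = 1 := by
      intro j hj
      refine ⟨?_, Nat.find_spec (hene j)⟩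
      have := Finset.le_sup (f := n₀) hj
      omega
    have hmd : ∀ j ∈ F, ∀ j' ∈ F, j ≠ j' → d j j' < m ∧ e j (d j j') ≠ e j' (d j j') := by
      intro j hj j' hj' hne'
      have hde : e j ≠ e j' := fun hh => hne' (einj hh)
      constructor
      · have h1 : d j j' ≤ F.sup (d j) := Finset.le_sup (f := d j) hj'
        have h2 : F.sup (d j) ≤ F.sup fun j => F.sup (d j) :=
          Finset.le_sup (f := fun j => F.sup (d j)) hj
        omega
      · simp only [d, dif_neg hde]
        exact Nat.find_spec (Function.ne_iff.mp hde)
    let φ : (Fin m → ZMod 2) → Option (ZMod 2) := fun σ =>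
      if h : ∃ j, j ∈ F ∧ (fun n : Fin m => e j n.val) = σ then some (y h.choose) else none
    have hφF : ∀ j ∈ F, φ (fun n : Fin m => e j n.val) = some (y j) := by
      intro j hj
      have h : ∃ j', j' ∈ F ∧ (fun n : Fin m => e j' n.val) = (fun n : Fin m => e j n.val) :=
        ⟨j, hj, rfl⟩
      have hcs := h.choose_spec
      have hcj : h.choose = j := by
        by_contra hne'
        obtain ⟨hd1, hd2⟩ := hmd _ hcs.1 _ hj hne'
        exact hd2 (congrFun hcs.2 ⟨d h.choose j, hd1⟩)
      simp only [φ, dif_pos h, hcj]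
    have hφ0 : φ (fun _ => 0) = none := by
      simp only [φ]
      rw [dif_neg]
      rintro ⟨j, hj, hfe⟩
      obtain ⟨h1, h2⟩ := hm₀ j hj
      have : e j (n₀ j) = 0 := congrFun hfe ⟨n₀ j, h1⟩
      rw [h2] at this
      exact hone this
    have hWsub : Wf ⟨m, φ⟩ ⊆ U := by
      refine subset_trans ?_ hbasic
      intro x hx j hj
      exact hx j (y j) (hφF j hj)
    have hWcard : Cardinal.continuum ≤ Cardinal.mk (Wf ⟨m, φ⟩) := by
      rw [← mk_nat_arrow_zmod2]
      have hzero : ∀ k, φ (fun n : Fin m => e (f (m + k)) n.val) = none := by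
        intro k
        have hz : (fun n : Fin m => e (f (m+k)) n.val) = (fun _ => (0 : ZMod 2)) := by
          funext n
          rw [hef, if_neg]
          have := n.isLt
          omega
        rw [hz, hφ0]
      let X : (ℕ → ZMod 2) → (ι → ZMod 2) := fun b i =>
        (φ (fun n : Fin m => e i n.val)).getD (if h : ∃ k, f (m + k) = i then b h.choose else 0)
      have hmem : ∀ b, X b ∈ Wf ⟨m, φ⟩ := by
        intro b i v hv
        have hv' : φ (fun n : Fin m => e i n.val) = some v := hv
        simp only [X]
        rw [hv']
        rfl
      have hXval : ∀ b k, X b (f (m+k)) = b k := by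
        intro b k
        have h : ∃ k', f (m + k') = f (m+k) := ⟨k, rfl⟩
        have hck : h.choose = k := by
          have := f.injective h.choose_spec
          omega
        simp only [X]
        rw [hzero k]
        simp only [Option.getD_none]
        rw [dif_pos h, hck]
      have hinj : Function.Injective (fun b => (⟨X b, hmem b⟩ : Wf ⟨m, φ⟩)) := by
        intro b b' hbb
        funext k
        have := congrArg (fun z : Wf ⟨m, φ⟩ => (z : ι → ZMod 2) (f (m+k))) hbb
        simpa [hXval] using this
      exact Cardinal.mk_le_of_injective hinj
    obtain ⟨n, hn⟩ := hσf ⟨m, φ⟩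
    refine ⟨n, ?_⟩
    dsimp only
    rw [hn, if_pos hWcard]
    exact hWsub
end

section
/- Let κ be a cardinal with ω ≤ κ ≤ 𝔠 and S a subgroup of the compact Boolean group C = ℤ(2)^κ with |S| < 𝔠. Then C contains a countable dense independent subset X such that the subgroup generated by X meets S only in the identity. -/
open Set

/-- A subset `X` of a Boolean group is independent if the sum of any finite subset of `X`
being zero forces all of its elements to be zero. -/
def BooleanIndependent {ι : Type*} (X : Set (ι → ZMod 2)) : Prop :=
  ∀ t : Finset (ι → ZMod 2), ↑t ⊆ X → ∑ x ∈ t, x = 0 → ∀ x ∈ t, x = 0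

/-
The coordinates of `ι` can be coded by distinct subsets of `ℕ`; the `k`-th membership indicators
generate a countable subalgebra of `ℤ(2)^ι` which separates points and hence, by interpolation on
finite sets, is dense. Enumerate it with every element repeated infinitely often as `q n`, and fix
pairwise disjoint infinite blocks `B n` of coordinates. Modifying `q n` on `B n` only keeps the
sequence dense, because a basic open set constrains finitely many coordinates and so meets only
finitely many blocks. On `B n` there are `𝔠` possible modifications but fewer than `𝔠`
restrictions to `B n` of the elements `s - ∑_{m ∈ T} q m` with `s ∈ S` and `T` finite; choosing
`x n` to avoid all of them, no nonempty finite sum `∑_{m ∈ T} x m` lies in `S` (restrict it to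
`B n` for some `n ∈ T`). In a Boolean group this gives independence and `⟨X⟩ ∩ S = 0` at once.
-/

open Filter Cardinal Function

universe u

theorem Subalgebra.exists_eqOn_of_separatesPoints {X K : Type*} [Field K]
    (A : Subalgebra K (X → K)) (hA : (A : Set (X → K)).SeparatesPoints)
    (I : Finset X) (f : X → K) : ∃ a ∈ A, EqOn a f I := by
  classical
  have hsep : ∀ x y, x ≠ y → ∃ a ∈ A, a x = 1 ∧ a y = 0 := by
    intro x y hxy
    obtain ⟨a, haA, ha⟩ := hA hxy
    refine ⟨(a x - a y)⁻¹ • (a - algebraMap K (X → K) (a y)),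
      A.smul_mem (A.sub_mem haA (A.algebraMap_mem _)) _, ?_, by simp⟩
    simp [inv_mul_cancel₀ (sub_ne_zero.2 ha)]
  have hbump : ∀ x, ∃ a ∈ A, a x = 1 ∧ ∀ y ∈ I, y ≠ x → a y = 0 := by
    intro x
    choose! b hbA hbx hby using fun y (hy : y ≠ x) => hsep x y hy.symm
    refine ⟨∏ y ∈ I.erase x, b y, A.prod_mem fun y hy => hbA y (Finset.ne_of_mem_erase hy),
      ?_, fun y hy hyx => ?_⟩
    · simp [Finset.prod_apply, Finset.prod_eq_one fun y hy => hbx y (Finset.ne_of_mem_erase hy)]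
    · rw [Finset.prod_apply]
      exact Finset.prod_eq_zero (Finset.mem_erase.2 ⟨hyx, hy⟩) (hby y hyx)
  choose e heA he1 he0 using hbump
  refine ⟨∑ x ∈ I, f x • e x, A.sum_mem fun x _ => A.smul_mem (heA x) _, fun y hy => ?_⟩
  rw [Finset.sum_apply, Finset.sum_eq_single_of_mem y hy fun x hx hxy => by
    simp [he0 x y hy hxy.symm]]
  simp [he1 y]

theorem dense_of_forall_finset_exists_eqOn {ι K : Type*} [TopologicalSpace K] {s : Set (ι → K)}
    (h : ∀ (I : Finset ι) (f : ι → K), ∃ a ∈ s, EqOn a f I) : Dense s := by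
  refine dense_iff_inter_open.2 fun U hU ⟨f, hf⟩ => ?_
  obtain ⟨I, u, hu, hIU⟩ := isOpen_pi_iff.1 hU f hf
  obtain ⟨a, has, haf⟩ := h I f
  exact ⟨a, hIU fun i hi => by rw [haf hi]; exact (hu i hi).2, has⟩

theorem exists_seq_frequently_eqOn_of_mk_le_continuum {ι K : Type*} [Field K] [Countable K]
    (hι : #ι ≤ 𝔠) :
    ∃ q : ℕ → ι → K, ∀ (I : Finset ι) (f : ι → K), ∃ᶠ n in atTop, EqOn (q n) f I := by
  classical
  obtain ⟨e⟩ : Nonempty (ι ↪ Set ℕ) := lift_mk_le'.1 (by simpa using hι)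
  let χ : ℕ → ι → K := fun k i => if k ∈ e i then 1 else 0
  let A := Algebra.adjoin K (range χ)
  have hA : (A : Set (ι → K)).SeparatesPoints := by
    intro x y hxy
    obtain ⟨k, hk⟩ : ∃ k, ¬(k ∈ e x ↔ k ∈ e y) := by
      by_contra! h
      exact hxy (e.injective (Set.ext h))
    refine ⟨χ k, Algebra.subset_adjoin ⟨k, rfl⟩, ?_⟩
    by_cases k ∈ e x <;> simp_all [χ]
  have hAc : (A : Set (ι → K)).Countable := by
    have : Countable (MvPolynomial ℕ K) := AddMonoidAlgebra.coeff_injective.countable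
    rw [show A = (MvPolynomial.aeval χ).range from Algebra.adjoin_range_eq_range_aeval K χ,
      AlgHom.coe_range]
    exact countable_range _
  obtain ⟨g, hg⟩ := hAc.exists_eq_range ⟨0, A.zero_mem⟩
  -- `g m` recurs at every index `Nat.pair m k`
  refine ⟨fun n => g n.unpair.1, fun I f => ?_⟩
  obtain ⟨a, haA, ha⟩ := A.exists_eqOn_of_separatesPoints hA I f
  obtain ⟨m, rfl⟩ : a ∈ range g := hg ▸ haA
  refine Nat.frequently_atTop_iff_infinite.2 (infinite_of_injective_forall_mem
    (f := Nat.pair m) (fun k l h => (Nat.pair_eq_pair.1 h).2) fun k => ?_)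
  simpa using ha

theorem exists_pairwise_disjoint_infinite (ι : Type*) [Infinite ι] :
    ∃ B : ℕ → Set ι, Pairwise (Disjoint on B) ∧ ∀ n, (B n).Infinite := by
  let b : ℕ × ℕ ↪ ι := (Denumerable.eqv (ℕ × ℕ)).toEmbedding.trans (Infinite.natEmbedding ι)
  refine ⟨fun n => range fun k => b (n, k), fun m n hmn => ?_, fun n => ?_⟩
  · exact disjoint_range_iff.2 fun k l h => hmn (Prod.ext_iff.1 (b.injective h)).1
  · exact infinite_range_of_injective fun k l h => (Prod.ext_iff.1 (b.injective h)).2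

theorem exists_eqOn_of_frequently_eqOn_of_eqOn_compl {ι K : Type*} {q x : ℕ → ι → K}
    {B : ℕ → Set ι} (hB : Pairwise (Disjoint on B))
    (hq : ∀ (I : Finset ι) (f : ι → K), ∃ᶠ n in atTop, EqOn (q n) f I)
    (hx : ∀ n, EqOn (x n) (q n) (B n)ᶜ) (I : Finset ι) (f : ι → K) : ∃ n, EqOn (x n) f I := by
  have hfar : ∀ᶠ n in atTop, ∀ i ∈ I, i ∉ B n := by
    refine I.eventually_all.2 fun i _ => ?_
    rw [← Nat.cofinite_eq_atTop]
    exact Set.Finite.eventually_cofinite_notMem <| Set.Subsingleton.finite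
      fun m hm n hn => hB.eq (not_disjoint_iff.2 ⟨i, hm, hn⟩)
  obtain ⟨n, hqn, hn⟩ := ((hq I f).and_eventually hfar).exists
  exact ⟨n, fun i hi => (hx n (hn i hi)).trans (hqn hi)⟩

theorem exists_eqOn_compl_forall_sum_notMem {ι K : Type u} [AddCommGroup K] [Nontrivial K]
    {B : ℕ → Set ι} (hB : Pairwise (Disjoint on B)) (hBinf : ∀ n, (B n).Infinite)
    (S : AddSubgroup (ι → K)) (hS : #S < 𝔠) (q : ℕ → ι → K) :
    ∃ x : ℕ → ι → K, (∀ n, EqOn (x n) (q n) (B n)ᶜ) ∧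
      ∀ T : Finset ℕ, T.Nonempty → ∑ n ∈ T, x n ∉ S := by
  have hcard : ∀ n, #(S × Finset ℕ) < #(B n → K) := by
    intro n
    have : Infinite (B n) := (hBinf n).to_subtype
    calc #(S × Finset ℕ) < 𝔠 := by
          simpa using mul_lt_of_lt aleph0_le_continuum hS aleph0_lt_continuum
      _ = 2 ^ ℵ₀ := two_power_aleph0.symm
      _ ≤ #K ^ #(B n) := power_le_power_right (two_le_iff.2 (exists_pair_ne K)) |>.trans <|
          power_le_power_left (mk_ne_zero K) (aleph0_le_mk _)
      _ = #(B n → K) := power_def _ _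
  have hv : ∀ n, ∃ v : B n → K, ∀ p : S × Finset ℕ,
      (fun i : B n => (p.1 : ι → K) i - ∑ m ∈ p.2, q m i) ≠ v := by
    intro n
    by_contra! h
    exact (mk_le_of_surjective h).not_gt (hcard n)
  choose v hv using hv
  let z : ℕ → ι → K := fun n => extend Subtype.val (v n) 0
  have hz : ∀ m n (i : B n), z m i = if m = n then v n i else 0 := by
    intro m n i
    split_ifs with h
    · subst h; exact Subtype.val_injective.extend_apply _ _ _
    · refine extend_apply' _ _ _ fun ⟨j, hj⟩ => ?_
      exact (hB h).ne_of_mem j.2 i.2 hj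
  refine ⟨q + z, fun n i hi => ?_, ?_⟩
  · have : ¬∃ j : B n, j.1 = i := by
      rintro ⟨j, rfl⟩
      exact hi j.2
    simp [z, extend_apply' _ _ _ this]
  · rintro T ⟨n, hn⟩ hT
    refine hv n (⟨_, hT⟩, T) (funext fun i => ?_)
    simp [Finset.sum_add_distrib, hz, hn]

theorem AddSubgroup.exists_sum_eq_of_mem_closure_range {α M : Type*} [AddCommGroup M]
    [Module (ZMod 2) M] {x : α → M} {y : M} (hy : y ∈ AddSubgroup.closure (range x)) :
    ∃ T : Finset α, ∑ a ∈ T, x a = y := by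
  have hspan : y ∈ Submodule.span (ZMod 2) (range x) :=
    (AddSubgroup.closure_le (Submodule.span (ZMod 2) (range x)).toAddSubgroup).2
      Submodule.subset_span hy
  obtain ⟨c, rfl⟩ := Finsupp.mem_span_range_iff_exists_finsupp.1 hspan
  refine ⟨c.support, Finset.sum_congr rfl fun a ha => ?_⟩
  have hca : c a = 1 := Fin.eq_one_of_ne_zero _ (Finsupp.mem_support_iff.1 ha)
  simp [hca]

section Boolean

variable {ι : Type*} {S : AddSubgroup (ι → ZMod 2)} {x : ℕ → ι → ZMod 2}

theorem injective_of_forall_sum_notMem (hx : ∀ T : Finset ℕ, T.Nonempty → ∑ n ∈ T, x n ∉ S) :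
    Injective x := by
  intro m n hmn
  by_contra hne
  refine hx {m, n} (Finset.insert_nonempty _ _) ?_
  rw [Finset.sum_pair hne, hmn, ZModModule.add_self]
  exact S.zero_mem

theorem booleanIndependent_range_of_forall_sum_notMem
    (hx : ∀ T : Finset ℕ, T.Nonempty → ∑ n ∈ T, x n ∉ S) : BooleanIndependent (range x) := by
  intro t ht hsum y hy
  have hinj := (injective_of_forall_sum_notMem hx).injOn (s := x ⁻¹' t)
  obtain ⟨n, rfl⟩ := ht hy
  refine absurd ?_ (hx (t.preimage x hinj) ⟨n, by simpa using hy⟩)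
  have hsumT : ∑ n ∈ t.preimage x hinj, x n = ∑ y ∈ t, y :=
    Finset.sum_preimage x t hinj id fun y hy hyx => absurd (ht hy) hyx
  rw [hsumT, hsum]
  exact S.zero_mem

theorem eq_zero_of_mem_closure_range_of_forall_sum_notMem
    (hx : ∀ T : Finset ℕ, T.Nonempty → ∑ n ∈ T, x n ∉ S) {y : ι → ZMod 2}
    (hy : y ∈ AddSubgroup.closure (range x)) (hyS : y ∈ S) : y = 0 := by
  obtain ⟨T, rfl⟩ := AddSubgroup.exists_sum_eq_of_mem_closure_range hy
  by_contra h
  exact hx T (Finset.nonempty_of_sum_ne_zero h) hyS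

end Boolean

/-- If `S` is a subgroup of `ℤ(2)^κ` (with `ω ≤ κ ≤ 𝔠`) of cardinality `< 𝔠`, then
`ℤ(2)^κ` has a countable dense independent subset `X` whose generated subgroup meets
`S` only in the identity. -/
theorem dense_independent_avoiding_small_subgroup
    (ι : Type) [Infinite ι] (hκ : Cardinal.mk ι ≤ Cardinal.continuum)
    (S : AddSubgroup (ι → ZMod 2)) (hS : Cardinal.mk S < Cardinal.continuum) :
    ∃ X : Set (ι → ZMod 2), X.Countable ∧ Dense X ∧ BooleanIndependent X ∧
      ∀ x ∈ AddSubgroup.closure X, x ∈ S → x = 0 := by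
  obtain ⟨q, hq⟩ := exists_seq_frequently_eqOn_of_mk_le_continuum (K := ZMod 2) hκ
  obtain ⟨B, hB, hBinf⟩ := exists_pairwise_disjoint_infinite ι
  obtain ⟨x, hxq, hxS⟩ := exists_eqOn_compl_forall_sum_notMem hB hBinf S hS q
  refine ⟨range x, countable_range x, dense_of_forall_finset_exists_eqOn fun I f => ?_,
    booleanIndependent_range_of_forall_sum_notMem hxS,
    fun y hy => eq_zero_of_mem_closure_range_of_forall_sum_notMem hxS hy⟩
  obtain ⟨n, hn⟩ := exists_eqOn_of_frequently_eqOn_of_eqOn_compl hB hq hxq I f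
  exact ⟨x n, mem_range_self n, hn⟩
end

section
/- Not every dense subgroup of G = ℤ(2)^ω × ℤ(4) meets the subgroup S = {0̄} × ℤ(4) trivially; in fact every dense subgroup D of G satisfies D ∩ S ≠ {identity}. -/
instance : TopologicalSpace (ZMod 4) := ⊥
instance : DiscreteTopology (ZMod 4) := ⟨rfl⟩

/-- Every dense subgroup `D` of `G = ℤ(2)^ω × ℤ(4)` meets the subgroup
`S = {0} × ℤ(4)` non-trivially. -/
theorem dense_subgroup_meets_S_nontrivially
    (D : AddSubgroup ((ℕ → ZMod 2) × ZMod 4))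
    (hD : Dense (D : Set ((ℕ → ZMod 2) × ZMod 4))) :
    ∃ x : (ℕ → ZMod 2) × ZMod 4, x ∈ D ∧ x.1 = 0 ∧ x ≠ 0 := by
  have hopen : IsOpen {p : (ℕ → ZMod 2) × ZMod 4 | p.2 = 1} := by
    have : {p : (ℕ → ZMod 2) × ZMod 4 | p.2 = 1} =
        (Set.univ : Set (ℕ → ZMod 2)) ×ˢ {(1 : ZMod 4)} := by
      ext p; constructor
      · intro h; exact ⟨trivial, h⟩
      · rintro ⟨-, h⟩; exact h
    rw [this]
    exact isOpen_univ.prod (isOpen_discrete _)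
  obtain ⟨d, hd1, hd2⟩ := hD.exists_mem_open hopen ⟨(0, 1), rfl⟩
  refine ⟨d + d, D.add_mem hd1 hd1, ?_, ?_⟩
  · funext i
    have : ∀ a : ZMod 2, a + a = 0 := by decide
    exact this (d.1 i)
  · intro h
    have h2 : d.2 + d.2 = 0 := congrArg Prod.snd h
    rw [hd2] at h2
    exact absurd h2 (by decide)
end

section
/- If K is a finite-dimensional Banach space and L is a topological vector space in which all closed vector subspaces are separable, then every closed vector subspace of K × L is separable. -/
/-!
Projecting a closed subspace `C ⊆ K × L` to `K` has finite-dimensional range, so the kernel of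
the projection has finite codimension in `C`; that kernel is a copy of the closed subspace
`{l | (0, l) ∈ C}` of `L`, hence separable. A subspace of finite codimension together with
finitely many vectors spans the whole space, and the span of a separable set is separable.
-/

open TopologicalSpace

namespace Submodule

variable {R M : Type*} [Ring R] [AddCommGroup M] [Module R M]

theorem exists_finite_sup_span_eq_top (N : Submodule R M) [Module.Finite R (M ⧸ N)] :
    ∃ t : Set M, t.Finite ∧ N ⊔ span R t = ⊤ := by
  obtain ⟨S, hS, hspan⟩ := fg_def.mp (Module.Finite.fg_top (R := R) (M := M ⧸ N))
  let lift := Function.surjInv (mkQ_surjective N)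
  refine ⟨lift '' S, hS.image lift, ?_⟩
  rw [← map_mkQ_eq_top, map_span, ← Set.image_comp, Function.comp_def]
  simpa [lift, Function.surjInv_eq] using hspan

theorem separableSpace_of_finite_quotient [TopologicalSpace R] [SeparableSpace R]
    [TopologicalSpace M] [ContinuousAdd M] [ContinuousSMul R M]
    (N : Submodule R M) [Module.Finite R (M ⧸ N)] (hN : IsSeparable (N : Set M)) :
    SeparableSpace M := by
  obtain ⟨t, ht, hNt⟩ := N.exists_finite_sup_span_eq_top
  have hspan : span R ((N : Set M) ∪ t) = ⊤ := by rwa [span_union, span_eq]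
  rw [← isSeparable_univ_iff, ← top_coe (R := R), ← hspan]
  exact (hN.union ht.isSeparable).span

theorem isSeparable_ker_fst_comp_subtype {R K L : Type*} [Semiring R]
    [AddCommMonoid K] [Module R K] [TopologicalSpace K]
    [AddCommMonoid L] [Module R L] [TopologicalSpace L]
    (C : Submodule R (K × L)) [SeparableSpace (C.comap (LinearMap.inr R K L))] :
    IsSeparable (LinearMap.ker ((LinearMap.fst R K L).comp C.subtype) : Set C) := by
  let embed : C.comap (LinearMap.inr R K L) → C := fun l ↦ ⟨(0, l), l.2⟩
  have hembed : Continuous embed :=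
    (continuous_const.prodMk continuous_subtype_val).subtype_mk _
  refine (isSeparable_range hembed).mono fun ⟨⟨k, l⟩, hkl⟩ hk ↦ ?_
  obtain rfl : k = 0 := hk
  exact ⟨⟨l, hkl⟩, rfl⟩

end Submodule

theorem closed_subspaces_of_product_with_finite_dimensional_general
    (K L : Type*) [NormedAddCommGroup K] [NormedSpace ℝ K] [FiniteDimensional ℝ K]
    [AddCommGroup L] [Module ℝ L] [TopologicalSpace L] [IsTopologicalAddGroup L]
    [ContinuousSMul ℝ L]
    (hL : ∀ N : Submodule ℝ L, IsClosed (N : Set L) → TopologicalSpace.SeparableSpace N)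
    (C : Submodule ℝ (K × L)) (hC : IsClosed (C : Set (K × L))) :
    TopologicalSpace.SeparableSpace C := by
  set p := (LinearMap.fst ℝ K L).comp C.subtype
  have : Module.Finite ℝ (C ⧸ LinearMap.ker p) := .equiv p.quotKerEquivRange.symm
  have hfiber : IsClosed (C.comap (LinearMap.inr ℝ K L) : Set L) :=
    hC.preimage (continuous_const.prodMk continuous_id)
  have := hL _ hfiber
  exact (LinearMap.ker p).separableSpace_of_finite_quotient C.isSeparable_ker_fst_comp_subtype

/-- If `K` is a finite-dimensional (real) Banach space and `L` is a Hausdorff topological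
vector space in which all closed vector subspaces are separable, then every closed vector
subspace of `K × L` is separable. -/
theorem closed_subspaces_of_product_with_finite_dimensional
    (K L : Type*) [NormedAddCommGroup K] [NormedSpace ℝ K] [FiniteDimensional ℝ K]
    [AddCommGroup L] [Module ℝ L] [TopologicalSpace L] [IsTopologicalAddGroup L]
    [ContinuousSMul ℝ L] [T2Space L]
    (hL : ∀ N : Submodule ℝ L, IsClosed (N : Set L) → TopologicalSpace.SeparableSpace N)
    (C : Submodule ℝ (K × L)) (hC : IsClosed (C : Set (K × L))) :
    TopologicalSpace.SeparableSpace C :=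
  closed_subspaces_of_product_with_finite_dimensional_general K L hL C hC
end

section
/- Let κ be an infinite cardinal with κ ≤ 𝔠 and let L, S be vector subspaces of ℝ^κ such that L is closed, the algebraic dimension of L is infinite, and the algebraic dimension of S is less than 𝔠. Then L contains a dense vector subspace M of countable algebraic dimension with M ∩ S = {0}. -/
/-!
A closed subspace `L` of `ℝ^ι` is the image of a continuous injective linear map from `ℝ^κ`,
where `κ ⊆ ι` indexes a basis of the coordinate functionals on `L`; closedness is what makes the
map onto `L`. Embedding `κ` into Cantor space, the uniform balls around the rational functions
that depend on finitely many bits form a countable π-network of `ℝ^κ`, and each such ball spans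
a subspace of dimension `𝔠` (the span contains the geometric sequences `t ^ n`, `0 < t < 1`,
placed on a copy of `ℕ` in `κ`). Since `S` plus finitely many vectors still has dimension `< 𝔠`, one can pick
inductively `x n` in the `n`-th member of the network outside `S + span {x k | k < n}`; the span
of the `x n` is the required subspace.
-/

open Set Function Cardinal Filter Topology

universe u

section LinearAlgebra

open Submodule

variable {K V : Type*} [DivisionRing K] [AddCommGroup V] [Module K V]

theorem linearIndependent_of_notMem_span_image_Iio {v : ℕ → V}
    (hv : ∀ n, v n ∉ span K (v '' Iio n)) : LinearIndependent K v := by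
  classical
  rw [linearIndependent_iff']
  intro s
  induction s using Finset.induction_on_max with
  | empty => simp
  | insert a s has ih =>
    intro g hg
    rw [Finset.sum_insert fun h => lt_irrefl a (has a h)] at hg
    have hga : g a = 0 := by
      by_contra hga
      refine hv a ?_
      rw [← inv_smul_smul₀ hga (v a), eq_neg_of_add_eq_zero_left hg]
      exact smul_mem _ _ <| neg_mem <|
        sum_mem fun i hi => smul_mem _ _ (subset_span ⟨i, has i hi, rfl⟩)
    rw [hga, zero_smul, zero_add] at hg
    intro i hi
    rcases Finset.mem_insert.1 hi with rfl | hi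
    · exact hga
    · exact ih g hg i hi

theorem linearIndependent_and_disjoint_of_notMem_sup_span_image_Iio {S : Submodule K V}
    {x : ℕ → V} (hx : ∀ n, x n ∉ S ⊔ span K (x '' Iio n)) :
    LinearIndependent K x ∧ Disjoint (span K (range x)) S := by
  have hq : LinearIndependent K (S.mkQ ∘ x) := by
    refine linearIndependent_of_notMem_span_image_Iio fun n hn => hx n ?_
    rwa [image_comp, span_image, comp_apply, ← Submodule.mem_comap, comap_map_mkQ] at hn
  exact ⟨hq.of_comp, S.ker_mkQ ▸ range_ker_disjoint hq⟩

theorem rank_sup_span_singleton_lt {c : Cardinal} (hc : ℵ₀ ≤ c) {W : Submodule K V}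
    (hW : Module.rank K W < c) (v : V) : Module.rank K ↥(W ⊔ K ∙ v) < c :=
  (rank_add_le_rank_add_rank _ _).trans_lt <| add_lt_of_lt hc hW <|
    (rank_span_le _).trans_lt <| by simpa using (natCast_lt_aleph0 (n := 1)).trans_le hc

theorem exists_seq_mem_linearIndependent_disjoint {c : Cardinal} (hc : ℵ₀ ≤ c) {S : Submodule K V}
    (hS : Module.rank K S < c) {B : ℕ → Set V} (hB : ∀ n, c ≤ Module.rank K (span K (B n))) :
    ∃ x : ℕ → V, (∀ n, x n ∈ B n) ∧ LinearIndependent K x ∧ Disjoint (span K (range x)) S := by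
  have hpick : ∀ n (W : Submodule K V), Module.rank K W < c → ∃ v ∈ B n, v ∉ W := by
    intro n W hW
    by_contra! hBW
    exact (hB n).not_gt (lt_of_le_of_lt (rank_mono (span_le.2 hBW)) hW)
  choose pick hpickB hpickW using hpick
  let W : ℕ → {W : Submodule K V // Module.rank K W < c} := fun n =>
    Nat.rec ⟨S, hS⟩ (fun n W => ⟨W.1 ⊔ K ∙ pick n W.1 W.2, rank_sup_span_singleton_lt hc W.2 _⟩) n
  let x : ℕ → V := fun n => pick n (W n).1 (W n).2
  have hW_succ : ∀ n, ((W (n + 1)).1 : Submodule K V) = (W n).1 ⊔ K ∙ x n := fun n => rfl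
  have hW_mono : Monotone fun n => (W n).1 :=
    monotone_nat_of_le_succ fun n => (hW_succ n).symm ▸ le_sup_left
  have hx_mem : ∀ k n, k < n → x k ∈ (W n).1 := fun k n hkn => by
    refine hW_mono hkn (?_ : x k ∈ (W (k + 1)).1)
    rw [hW_succ]
    exact mem_sup_right (mem_span_singleton_self _)
  refine ⟨x, fun n => hpickB _ _ _, linearIndependent_and_disjoint_of_notMem_sup_span_image_Iio ?_⟩
  intro n hn
  refine hpickW n (W n).1 (W n).2 (sup_le (hW_mono (Nat.zero_le n)) (span_le.2 ?_) hn)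
  rintro _ ⟨k, hk, rfl⟩
  exact hx_mem k n hk

end LinearAlgebra

section ClosedSubspace

variable {K : Type*} [Field K]

theorem Submodule.surjective_restrict_of_linearIndependent {ι F : Type*} [Finite F]
    (L : Submodule K (ι → K)) (a : F → ι)
    (h : LinearIndependent K fun j (x : L) => (x : ι → K) (a j)) :
    Surjective fun (x : L) j => (x : ι → K) (a j) := by
  let T : L →ₗ[K] F → K := LinearMap.funLeft K K a ∘ₗ L.subtype
  change Surjective T
  rw [← LinearMap.range_eq_top, ← Submodule.span_eq (LinearMap.range T), LinearMap.coe_range]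
  exact span_flip_eq_top_iff_linearIndependent.2 h

variable [TopologicalSpace K]

theorem Submodule.denseRange_restrict_of_linearIndependent {ι κ : Type*}
    (L : Submodule K (ι → K)) (a : κ → ι)
    (h : LinearIndependent K fun j (x : L) => (x : ι → K) (a j)) :
    DenseRange fun (x : L) j => (x : ι → K) (a j) := by
  intro y
  rw [_root_.mem_closure_iff]
  intro U hU hyU
  obtain ⟨F, u, hu, hFU⟩ := isOpen_pi_iff.1 hU y hyU
  obtain ⟨x, hx⟩ := L.surjective_restrict_of_linearIndependent (a ∘ ((↑) : F → κ))
    (h.comp _ Subtype.val_injective) fun j => y j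
  refine ⟨_, hFU fun j hj => ?_, mem_range_self x⟩
  rw [show (x : ι → K) (a j) = y j from congrFun hx ⟨j, hj⟩]
  exact (hu j hj).2

variable [IsTopologicalRing K] [T2Space K]

/-- The map is `y ↦ (i ↦ ∑ j, r i j * y j)`, where `r i` expresses the coordinate `x ↦ x i` on
`L` in a basis `x ↦ x (a j)` of the span of all coordinates. -/
theorem exists_continuousLinearMap_pi_injective_range_eq_of_isClosed {ι : Type u}
    {L : Submodule K (ι → K)} (hL : IsClosed (L : Set (ι → K))) :
    ∃ (κ : Type u) (a : κ → ι) (R : (κ → K) →L[K] (ι → K)),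
      Injective a ∧ Injective R ∧ range R = L := by
  let e : ι → L → K := fun i x => (x : ι → K) i
  obtain ⟨κ, a, ha, hspan, hli⟩ := exists_linearIndependent' K e
  have hrepr : ∀ i, ∃ r : κ →₀ K, ∀ x : L,
      (x : ι → K) i = r.sum fun j c => c * (x : ι → K) (a j) := by
    intro i
    have hi : e i ∈ Submodule.span K (range (e ∘ a)) := hspan ▸ Submodule.subset_span ⟨i, rfl⟩
    obtain ⟨r, hr⟩ := Finsupp.mem_span_range_iff_exists_finsupp.1 hi
    exact ⟨r, fun x => by
      change e i x = _
      simp [← hr, Finsupp.sum, e]⟩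
  choose r hr using hrepr
  let R : (κ → K) →L[K] (ι → K) :=
    ContinuousLinearMap.pi fun i => ∑ j ∈ (r i).support, r i j • ContinuousLinearMap.proj j
  let T : L → κ → K := fun x j => (x : ι → K) (a j)
  have hT : Continuous T :=
    continuous_pi fun j => (continuous_apply (a j)).comp continuous_subtype_val
  have hRT : ∀ x, R (T x) = x := fun x => funext fun i => by simp [R, T, hr i x, Finsupp.sum]
  have hdense : DenseRange T := L.denseRange_restrict_of_linearIndependent a hli
  have hRL : ∀ y, R y ∈ L := by
    have hR_range : range R ⊆ closure L :=
      (R.continuous.range_subset_closure_image_dense hdense).trans <| closure_mono <| by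
        rintro _ ⟨_, ⟨x, rfl⟩, rfl⟩
        rw [hRT]
        exact x.2
    exact fun y => hL.closure_subset (hR_range (mem_range_self y))
  have hTR : ∀ y, T ⟨R y, hRL y⟩ = y := congrFun <|
    hdense.equalizer (hT.comp (R.continuous.subtype_mk hRL)) continuous_id <|
      funext fun x => by simp [hRT]
  refine ⟨κ, a, R, ha, fun y y' h => ?_, ?_⟩
  · rw [← hTR y, ← hTR y']
    simp only [h]
  · ext z
    exact ⟨by rintro ⟨y, rfl⟩; exact hRL y, fun hz => ⟨T ⟨z, hz⟩, hRT ⟨z, hz⟩⟩⟩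

end ClosedSubspace

def IsPiNetworkOn {X ι : Type*} [TopologicalSpace X] (B : ι → Set X) (L : Set X) : Prop :=
  (∀ i, B i ⊆ L) ∧ ∀ U, IsOpen U → (U ∩ L).Nonempty → ∃ i, B i ⊆ U

theorem IsPiNetworkOn.image {X Y ι : Type*} [TopologicalSpace X] [TopologicalSpace Y]
    {B : ι → Set X} (hB : IsPiNetworkOn B univ) {f : X → Y} (hf : Continuous f) :
    IsPiNetworkOn (fun i => f '' B i) (range f) := by
  refine ⟨fun i => image_subset_range _ _, ?_⟩
  rintro U hU ⟨_, hU_mem, x, rfl⟩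
  obtain ⟨i, hi⟩ := hB.2 (f ⁻¹' U) (hU.preimage hf) ⟨x, hU_mem, mem_univ x⟩
  exact ⟨i, image_subset_iff.2 hi⟩

section RealPi

variable {κ : Type*}

theorem linearIndependent_fun_pow (K : Type*) [CommRing K] [IsDomain K] :
    LinearIndependent K fun (t : K) (k : ℕ) => t ^ k :=
  (linearIndependent_monoidHom (Multiplicative ℕ) K).comp (powersHom K) (powersHom K).injective

def uniformBall (c : κ → ℝ) (ε : ℝ) : Set (κ → ℝ) :=
  {z | ∀ k, |z k - c k| < ε}

/-- With `u` an embedding of `κ` into Cantor space: the function reading off from the table `q`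
a rational value for the first `n` bits of `u k`. -/
def prefixFun (u : κ → ℕ → Bool) (q : Σ n : ℕ, (Fin n → Bool) → ℚ) : κ → ℝ :=
  fun k => q.2 fun i => u k i

theorem exists_prefixFun_near {u : κ → ℕ → Bool} (hu : Injective u) (G : Finset κ) (c : κ → ℝ)
    {ε : ℝ} (hε : 0 < ε) : ∃ q, ∀ k ∈ G, |prefixFun u q k - c k| < ε := by
  classical
  have hsep : ∀ k ∈ G, ∀ k' ∈ G, ∀ᶠ n in atTop,
      (fun i : Fin n => u k i) = (fun i : Fin n => u k' i) → k = k' := by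
    intro k _ k' _
    by_cases h : k = k'
    · exact Eventually.of_forall fun _ _ => h
    obtain ⟨i, hi⟩ : ∃ i, u k i ≠ u k' i := by
      by_contra! h'
      exact h (hu (funext h'))
    filter_upwards [eventually_gt_atTop i] with n hn heq
    exact absurd (congrFun heq ⟨i, hn⟩) hi
  obtain ⟨n, hn⟩ :=
    ((eventually_all_finset G).2 fun k hk => (eventually_all_finset G).2 (hsep k hk)).exists
  choose r hr using fun k => exists_rat_near (c k) hε
  let p : G → Fin n → Bool := fun k i => u k i
  have hp : Injective p := fun k k' h => Subtype.ext (hn _ k.2 _ k'.2 h)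
  refine ⟨⟨n, extend p (fun k => r k) 0⟩, fun k hk => ?_⟩
  have : prefixFun u ⟨n, extend p (fun k => r k) 0⟩ k = r k := by
    change ((extend p (fun k => r k) 0 (p ⟨k, hk⟩) : ℚ) : ℝ) = r k
    rw [hp.extend_apply]
  rw [this, abs_sub_comm]
  exact hr k

theorem exists_finset_nat_subset_of_mem_nhds {y : κ → ℝ} {U : Set (κ → ℝ)} (hU : U ∈ 𝓝 y) :
    ∃ (I : Finset κ) (m : ℕ), {z | ∀ k ∈ I, |z k - y k| < 1 / (m + 1)} ⊆ U := by
  rw [nhds_pi, Filter.mem_pi'] at hU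
  obtain ⟨I, t, ht, hIt⟩ := hU
  have : ∀ k ∈ I, ∀ᶠ m : ℕ in atTop, Metric.ball (y k) (1 / (m + 1)) ⊆ t k := by
    intro k _
    obtain ⟨n, -, hn⟩ := Metric.nhds_basis_ball_inv_nat_succ.mem_iff.1 (ht k)
    filter_upwards [eventually_ge_atTop n] with m hm
    exact (Metric.ball_subset_ball (Nat.one_div_le_one_div hm)).trans hn
  obtain ⟨m, hm⟩ := ((eventually_all_finset I).2 this).exists
  refine ⟨I, m, fun z hz => hIt fun k hk => hm k hk ?_⟩
  rw [Metric.mem_ball, Real.dist_eq]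
  exact hz k hk

theorem exists_uniformBall_prefixFun_subset {u : κ → ℕ → Bool} (hu : Injective u)
    {U : Set (κ → ℝ)} (hU : IsOpen U) {y : κ → ℝ} (hy : y ∈ U) :
    ∃ q, ∃ m : ℕ, uniformBall (prefixFun u q) (1 / ((m : ℝ) + 1)) ⊆ U := by
  obtain ⟨I, m, hIm⟩ := exists_finset_nat_subset_of_mem_nhds (hU.mem_nhds hy)
  obtain ⟨q, hq⟩ := exists_prefixFun_near hu I y (ε := 1 / (m + 1) / 2) (by positivity)
  refine ⟨q, 2 * m + 1, fun z hz => hIm fun k hk => ?_⟩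
  have hzk : |z k - prefixFun u q k| < 1 / (m + 1) / 2 :=
    (hz k).trans_eq (by push_cast; field_simp; ring)
  calc |z k - y k| ≤ |z k - prefixFun u q k| + |prefixFun u q k - y k| := abs_sub_le _ _ _
    _ < 1 / (m + 1) / 2 + 1 / (m + 1) / 2 := add_lt_add hzk (hq k hk)
    _ = 1 / (m + 1) := by ring

theorem continuum_le_rank_span_uniformBall [Infinite κ] (c : κ → ℝ) {ε : ℝ} (hε : 0 < ε) :
    𝔠 ≤ Module.rank ℝ (Submodule.span ℝ (uniformBall c ε)) := by
  let b := Infinite.natEmbedding κ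
  let g : Ioo (0 : ℝ) 1 → κ → ℝ := fun t => extend b (fun k => (t : ℝ) ^ k) 0
  have hind : LinearIndependent ℝ g := by
    refine LinearIndependent.of_comp (LinearMap.funLeft ℝ ℝ (b : ℕ → κ)) ?_
    have : LinearMap.funLeft ℝ ℝ (b : ℕ → κ) ∘ g = (fun (t : ℝ) (k : ℕ) => t ^ k) ∘ (↑) := by
      funext t k
      simp [g, b.injective.extend_apply]
    rw [this]
    exact (linearIndependent_fun_pow ℝ).comp _ Subtype.val_injective
  have hg_le : ∀ t k, |g t k| ≤ 1 := by
    intro t k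
    by_cases hk : ∃ n, b n = k
    · obtain ⟨n, rfl⟩ := hk
      simp only [g, b.injective.extend_apply, abs_pow]
      exact pow_le_one₀ (abs_nonneg _) (abs_le.2 ⟨by linarith [t.2.1], t.2.2.le⟩)
    · simp [g, extend_apply' _ _ _ hk]
  have hmem : ∀ t, g t ∈ Submodule.span ℝ (uniformBall c ε) := by
    intro t
    have hc : c ∈ uniformBall c ε := fun k => by simpa using hε
    have hct : c + (ε / 2) • g t ∈ uniformBall c ε := fun k => by
      simp only [Pi.add_apply, Pi.smul_apply, smul_eq_mul, add_sub_cancel_left, abs_mul,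
        abs_of_pos (half_pos hε)]
      nlinarith [hg_le t k]
    rw [← inv_smul_smul₀ (half_pos hε).ne' (g t), ← add_sub_cancel_left c ((ε / 2) • g t)]
    exact Submodule.smul_mem _ _ (Submodule.sub_mem _ (Submodule.subset_span hct)
      (Submodule.subset_span hc))
  calc 𝔠 = lift #(Ioo (0 : ℝ) 1) := by rw [mk_Ioo_real zero_lt_one, lift_continuum]
    _ = #(range g) := by rw [← mk_range_eq_of_injective hind.injective, lift_uzero]
    _ = Module.rank ℝ (Submodule.span ℝ (range g)) := (rank_span hind).symm
    _ ≤ _ := Submodule.rank_mono (Submodule.span_le.2 (range_subset_iff.2 hmem))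

theorem exists_isPiNetworkOn_univ_continuum_le_rank_span [Infinite κ] (hκ : #κ ≤ 𝔠) :
    ∃ B : ℕ → Set (κ → ℝ),
      IsPiNetworkOn B univ ∧ ∀ n, 𝔠 ≤ Module.rank ℝ (Submodule.span ℝ (B n)) := by
  obtain ⟨u⟩ : Nonempty (κ ↪ (ℕ → Bool)) := by
    rw [← lift_mk_le']
    simpa using hκ
  obtain ⟨e, he⟩ := exists_surjective_nat ((Σ n : ℕ, (Fin n → Bool) → ℚ) × ℕ)
  let B : ℕ → Set (κ → ℝ) := fun n => uniformBall (prefixFun u (e n).1) (1 / ((e n).2 + 1))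
  refine ⟨B, ⟨fun _ => subset_univ _, fun U hU ⟨y, hyU, _⟩ => ?_⟩,
    fun n => continuum_le_rank_span_uniformBall _ (by positivity)⟩
  obtain ⟨q, m, hqm⟩ := exists_uniformBall_prefixFun_subset u.injective hU hyU
  obtain ⟨n, hn⟩ := he (q, m)
  exact ⟨n, by simpa [B, hn] using hqm⟩

end RealPi

theorem exists_submodule_le_rank_eq_aleph0_subset_closure_disjoint {K E : Type*} [DivisionRing K]
    [AddCommGroup E] [Module K E] [TopologicalSpace E] {c : Cardinal} (hc : ℵ₀ ≤ c)
    {L S : Submodule K E} (hS : Module.rank K S < c) {B : ℕ → Set E}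
    (hBL : IsPiNetworkOn B L) (hB : ∀ n, c ≤ Module.rank K (Submodule.span K (B n))) :
    ∃ M : Submodule K E, M ≤ L ∧ Module.rank K M = ℵ₀ ∧
      (L : Set E) ⊆ closure (M : Set E) ∧ M ⊓ S = ⊥ := by
  obtain ⟨x, hxB, hli, hdisj⟩ := exists_seq_mem_linearIndependent_disjoint hc hS hB
  refine ⟨Submodule.span K (range x),
    Submodule.span_le.2 (range_subset_iff.2 fun n => hBL.1 n (hxB n)), ?_, ?_,
    disjoint_iff.1 hdisj⟩
  · rw [rank_span hli]
    simpa using mk_range_eq_of_injective hli.injective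
  · intro z hz
    rw [mem_closure_iff]
    intro U hU hzU
    obtain ⟨n, hn⟩ := hBL.2 U hU ⟨z, hzU, hz⟩
    exact ⟨x n, hn (hxB n), Submodule.subset_span (mem_range_self n)⟩

theorem dense_countable_dimensional_subspace_avoiding_general
    (ι : Type) (hκ : Cardinal.mk ι ≤ Cardinal.continuum)
    (L S : Submodule ℝ (ι → ℝ)) (hL : IsClosed (L : Set (ι → ℝ)))
    (hdimL : Cardinal.aleph0 ≤ Module.rank ℝ L)
    (hdimS : Module.rank ℝ S < Cardinal.continuum) :
    ∃ M : Submodule ℝ (ι → ℝ), M ≤ L ∧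
      Module.rank ℝ M = Cardinal.aleph0 ∧
      (L : Set (ι → ℝ)) ⊆ closure (M : Set (ι → ℝ)) ∧
      M ⊓ S = ⊥ := by
  obtain ⟨κ, a, R, ha, hR, hRL⟩ := exists_continuousLinearMap_pi_injective_range_eq_of_isClosed hL
  have hRL' : LinearMap.range (R : (κ → ℝ) →ₗ[ℝ] ι → ℝ) = L := SetLike.coe_injective hRL
  have : Infinite κ := not_finite_iff_infinite.1 fun _ =>
    hdimL.not_gt <| hRL' ▸ (rank_range_le _).trans_lt (Module.rank_lt_aleph0 ℝ _)
  obtain ⟨B, hBnet, hB⟩ :=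
    exists_isPiNetworkOn_univ_continuum_le_rank_span ((mk_le_of_injective ha).trans hκ)
  refine exists_submodule_le_rank_eq_aleph0_subset_closure_disjoint aleph0_le_continuum hdimS
    (hRL ▸ hBnet.image R.continuous) fun n => ?_
  rw [← ContinuousLinearMap.coe_coe, Submodule.span_image, rank_map_eq hR]
  exact hB n

/-- Let `κ` be an infinite cardinal with `κ ≤ 𝔠` (realized as an index type `ι`) and let
`L, S` be vector subspaces of `ℝ^κ` with `L` closed, `dim L` infinite and `dim S < 𝔠`.
Then `L` contains a dense vector subspace `M` of countable dimension with `M ∩ S = {0}`. -/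
theorem dense_countable_dimensional_subspace_avoiding
    (ι : Type) [Infinite ι] (hκ : Cardinal.mk ι ≤ Cardinal.continuum)
    (L S : Submodule ℝ (ι → ℝ)) (hL : IsClosed (L : Set (ι → ℝ)))
    (hdimL : Cardinal.aleph0 ≤ Module.rank ℝ L)
    (hdimS : Module.rank ℝ S < Cardinal.continuum) :
    ∃ M : Submodule ℝ (ι → ℝ), M ≤ L ∧
      Module.rank ℝ M = Cardinal.aleph0 ∧
      (L : Set (ι → ℝ)) ⊆ closure (M : Set (ι → ℝ)) ∧
      M ⊓ S = ⊥ :=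
  dense_countable_dimensional_subspace_avoiding_general ι hκ L S hL hdimL hdimS
end
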